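/- arXiv:math/9901080 — 8 statements merged into one kernel-verified Lean document; each statement's English description precedes it below -/
import Mathlib

section
/- In the algebra U_q(iso_2), the generators I and T2 satisfy the Serre-type relation I T2^2 - (q+q^{-1}) T2 I T2 + T2^2 I = 0. -/
/-! Substituting `T1 = [I, T2]_q` into `[T2, T1]_q = 0` yields, up to sign, exactly the Serre
expression, since the scalars produced are `sq ^ 2 = q`, `sq⁻¹ ^ 2 = q⁻¹` and `sq * sq⁻¹ = 1`. -/

section

variable {K A : Type*} [Field K] [Ring A] [Algebra K A]

def qCommutator (s : K) (a b : A) : A := s • (a * b) - s⁻¹ • (b * a)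

theorem qCommutator_qCommutator_self {s : K} (hs : s ≠ 0) (x y : A) :
    qCommutator s y (qCommutator s x y) =
      -(x * y ^ 2 - (s ^ 2 + (s ^ 2)⁻¹) • (y * x * y) + y ^ 2 * x) := by
  simp only [qCommutator, mul_sub, sub_mul, mul_smul_comm, smul_mul_assoc, pow_two, mul_assoc]
  match_scalars
  all_goals field_simp
  ring

end

theorem stmt1_general (q sq : ℂ) (hq : q ≠ 0) (hsq : sq ^ 2 = q)
    (A : Type*) [Ring A] [Algebra ℂ A] (I T1 T2 : A)
    (h1 : sq • (I * T2) - sq⁻¹ • (T2 * I) = T1)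
    (h3 : sq • (T2 * T1) - sq⁻¹ • (T1 * T2) = 0) :
    I * T2 ^ 2 - (q + q⁻¹) • (T2 * I * T2) + T2 ^ 2 * I = 0 := by
  have hs : sq ≠ 0 := by
    rintro rfl
    exact hq (by simpa using hsq.symm)
  rw [← neg_eq_zero, ← hsq, ← qCommutator_qCommutator_self hs]
  exact (congrArg (qCommutator sq T2) h1).trans h3

/-- In U_q(iso₂), the generators I and T2 satisfy the Serre-type relation
I T2² - (q+q⁻¹) T2 I T2 + T2² I = 0. -/
theorem stmt1 (q sq : ℂ) (hq : q ≠ 0) (hsq : sq ^ 2 = q)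
    (A : Type*) [Ring A] [Algebra ℂ A] (I T1 T2 : A)
    (h1 : sq • (I * T2) - sq⁻¹ • (T2 * I) = T1)
    (h2 : sq • (T1 * I) - sq⁻¹ • (I * T1) = T2)
    (h3 : sq • (T2 * T1) - sq⁻¹ • (T1 * T2) = 0) :
    I * T2 ^ 2 - (q + q⁻¹) • (T2 * I * T2) + T2 ^ 2 * I = 0 :=
  stmt1_general q sq hq hsq A I T1 T2 h1 h3
end

section
/- The unital associative algebra generated by I and T2 subject to the relations I^2 T2 - (q+q^{-1}) I T2 I + T2 I^2 = -T2 and I T2^2 - (q+q^{-1}) T2 I T2 + T2^2 I = 0, with T1 defined as T1 := q^{1/2}IT2 - q^{-1/2}T2I, satisfies all three defining relations of U_q(iso_2): [I,T2]_q = T1, [T1,I]_q = T2, and [T2,T1]_q = 0. -/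
/-! Expanding the nested q-brackets, `[[I, T2]_q, I]_q = (q + q⁻¹) I T2 I - I² T2 - T2 I²` and
`[T2, [I, T2]_q]_q = (q + q⁻¹) T2 I T2 - I T2² - T2² I`, so the two defining relations of the
algebra are literally the second and third relations of `U_q(iso₂)`; the first one is the
definition of `T1`. -/

section

variable {K A : Type*} [Field K] [Ring A] [Algebra K A]

/-- The q-bracket `[a, b]_q`, parametrised by `s = q^{1/2}`. -/
def qBracket (s : K) (a b : A) : A := s • (a * b) - s⁻¹ • (b * a)

theorem qBracket_qBracket_left {s : K} (hs : s ≠ 0) (a b : A) :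
    qBracket s (qBracket s a b) a = (s ^ 2 + (s ^ 2)⁻¹) • (a * b * a) - a ^ 2 * b - b * a ^ 2 := by
  simp only [qBracket, sub_mul, mul_sub, smul_mul_assoc, mul_smul_comm, smul_sub, smul_smul,
    mul_inv_cancel₀ hs, inv_mul_cancel₀ hs, one_smul, mul_assoc, sq, mul_inv, add_smul]
  abel

theorem qBracket_qBracket_right {s : K} (hs : s ≠ 0) (a b : A) :
    qBracket s b (qBracket s a b) = (s ^ 2 + (s ^ 2)⁻¹) • (b * a * b) - a * b ^ 2 - b ^ 2 * a := by
  simp only [qBracket, sub_mul, mul_sub, smul_mul_assoc, mul_smul_comm, smul_sub, smul_smul,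
    mul_inv_cancel₀ hs, inv_mul_cancel₀ hs, one_smul, mul_assoc, sq, mul_inv, add_smul]
  abel

end

/-- In any unital associative ℂ-algebra generated by elements I, T2
satisfying the relations I²T2 - (q+q⁻¹)IT2I + T2I² = -T2 and
IT2² - (q+q⁻¹)T2IT2 + T2²I = 0, setting T1 := q^{1/2}IT2 - q^{-1/2}T2I, all three
defining relations of U_q(iso₂) hold. -/
theorem stmt2 (q sq : ℂ) (hq : q ≠ 0) (hsq : sq ^ 2 = q)
    (A : Type*) [Ring A] [Algebra ℂ A] (I T2 : A)
    (h4 : I ^ 2 * T2 - (q + q⁻¹) • (I * T2 * I) + T2 * I ^ 2 = -T2)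
    (h5 : I * T2 ^ 2 - (q + q⁻¹) • (T2 * I * T2) + T2 ^ 2 * I = 0) :
    let T1 := sq • (I * T2) - sq⁻¹ • (T2 * I)
    sq • (I * T2) - sq⁻¹ • (T2 * I) = T1 ∧
    sq • (T1 * I) - sq⁻¹ • (I * T1) = T2 ∧
    sq • (T2 * T1) - sq⁻¹ • (T1 * T2) = 0 := by
  have hs : sq ≠ 0 := by rintro rfl; exact hq (by simp [← hsq])
  refine ⟨rfl, ?_, ?_⟩
  · change qBracket sq (qBracket sq I T2) I = T2
    rw [qBracket_qBracket_left hs, hsq]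
    linear_combination (norm := module) -h4
  · change qBracket sq T2 (qBracket sq I T2) = 0
    rw [qBracket_qBracket_right hs, hsq]
    linear_combination (norm := module) -h5
end

section
/- The element C_q = q^{-1}T1^2 + qT2^2 + q^{-3/2}(1-q^2)T1 T2 I belongs to the center of the algebra U_q(iso_2); that is, C_q commutes with each of the generators I, T1, T2. -/
/-!
With `q = s ^ 2`, each defining relation can be solved for its out-of-order product, so that every
word in `I, T1, T2` rewrites to a combination of ordered monomials `T1 ^ a * T2 ^ b * I ^ c`.
Bracketing each of the three monomials of `C_q` with a generator gives one or two ordered monomials,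
and the coefficients of `C_q` are exactly those for which these contributions cancel.
-/

section SmulSubInvSmul

variable {K M : Type*} [Field K] [AddCommGroup M] [Module K M] {s : K} {x y z : M}

theorem right_eq_of_smul_sub_inv_smul_eq (hs : s ≠ 0) (h : s • x - s⁻¹ • y = z) :
    y = s ^ 2 • x - s • z := by
  rw [← h, smul_sub, smul_smul, smul_smul, mul_inv_cancel₀ hs, one_smul, sq, sub_sub_cancel]

theorem left_eq_of_smul_sub_inv_smul_eq (hs : s ≠ 0) (h : s • x - s⁻¹ • y = z) :
    x = (s ^ 2)⁻¹ • y + s⁻¹ • z := by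
  rw [← h, smul_sub, smul_smul, smul_smul, inv_mul_cancel₀ hs, one_smul, sq, mul_inv,
    add_sub_cancel]

end SmulSubInvSmul

attribute [local instance] LieRing.ofAssociativeRing

namespace UqIso2

variable {K A : Type*} [Field K] [Ring A] [Algebra K A] {s : K} {I T1 T2 : A}

structure NormalOrderRels (s : K) (I T1 T2 : A) : Prop where
  T2_mul_T1 : T2 * T1 = (s ^ 2)⁻¹ • (T1 * T2)
  I_mul_T1 : I * T1 = s ^ 2 • (T1 * I) - s • T2
  I_mul_T2 : I * T2 = (s ^ 2)⁻¹ • (T2 * I) + s⁻¹ • T1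

namespace NormalOrderRels

theorem of_rels (hs : s ≠ 0)
    (h1 : s • (I * T2) - s⁻¹ • (T2 * I) = T1)
    (h2 : s • (T1 * I) - s⁻¹ • (I * T1) = T2)
    (h3 : s • (T2 * T1) - s⁻¹ • (T1 * T2) = 0) : NormalOrderRels s I T1 T2 where
  T2_mul_T1 := by simpa using left_eq_of_smul_sub_inv_smul_eq hs h3
  I_mul_T1 := right_eq_of_smul_sub_inv_smul_eq hs h2
  I_mul_T2 := left_eq_of_smul_sub_inv_smul_eq hs h1

-- Right-nested forms, so that `simp` with `mul_assoc` normal-orders whole words.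
theorem T2_mul_T1_mul (h : NormalOrderRels s I T1 T2) (x : A) :
    T2 * (T1 * x) = (s ^ 2)⁻¹ • (T1 * (T2 * x)) := by
  rw [← mul_assoc, h.T2_mul_T1, smul_mul_assoc, mul_assoc]

theorem I_mul_T1_mul (h : NormalOrderRels s I T1 T2) (x : A) :
    I * (T1 * x) = s ^ 2 • (T1 * (I * x)) - s • (T2 * x) := by
  rw [← mul_assoc, h.I_mul_T1, sub_mul, smul_mul_assoc, smul_mul_assoc, mul_assoc]

theorem I_mul_T2_mul (h : NormalOrderRels s I T1 T2) (x : A) :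
    I * (T2 * x) = (s ^ 2)⁻¹ • (T2 * (I * x)) + s⁻¹ • (T1 * x) := by
  rw [← mul_assoc, h.I_mul_T2, add_mul, smul_mul_assoc, smul_mul_assoc, mul_assoc]

end NormalOrderRels

theorem lie_T2_sq_T1 (h : NormalOrderRels s I T1 T2) :
    ⁅T2 ^ 2, T1⁆ = ((s ^ 2)⁻¹ ^ 2 - 1) • (T1 * T2 ^ 2) := by
  simp only [Ring.lie_def, sq, mul_assoc, h.T2_mul_T1, h.T2_mul_T1_mul, mul_smul_comm, smul_smul]
  match_scalars; ring

theorem lie_T1_mul_T2_mul_I_T1 (hs : s ≠ 0) (h : NormalOrderRels s I T1 T2) :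
    ⁅T1 * T2 * I, T1⁆ = -s • (T1 * T2 ^ 2) := by
  simp only [Ring.lie_def, sq, mul_assoc, h.T2_mul_T1_mul, h.I_mul_T1, mul_sub,
    mul_smul_comm, smul_smul]
  match_scalars <;> field_simp
  ring

theorem lie_T1_sq_T2 (h : NormalOrderRels s I T1 T2) :
    ⁅T1 ^ 2, T2⁆ = (1 - (s ^ 2)⁻¹ ^ 2) • (T1 ^ 2 * T2) := by
  simp only [Ring.lie_def, sq, mul_assoc, h.T2_mul_T1, h.T2_mul_T1_mul, mul_smul_comm, smul_smul]
  match_scalars; ring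

theorem lie_T1_mul_T2_mul_I_T2 (h : NormalOrderRels s I T1 T2) :
    ⁅T1 * T2 * I, T2⁆ = (s⁻¹ * (s ^ 2)⁻¹) • (T1 ^ 2 * T2) := by
  simp only [Ring.lie_def, sq, mul_assoc, h.T2_mul_T1, h.T2_mul_T1_mul, h.I_mul_T2, mul_add,
    mul_smul_comm, smul_smul]
  match_scalars <;> ring

theorem lie_T1_sq_I (hs : s ≠ 0) (h : NormalOrderRels s I T1 T2) :
    ⁅T1 ^ 2, I⁆ = (1 - s ^ 4) • (T1 ^ 2 * I) + (s ^ 3 + s⁻¹) • (T1 * T2) := by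
  simp only [Ring.lie_def, sq, mul_assoc, h.T2_mul_T1, h.I_mul_T1, h.I_mul_T1_mul, mul_sub,
    smul_sub, mul_smul_comm, smul_smul]
  match_scalars <;> field_simp
  ring

theorem lie_T2_sq_I (h : NormalOrderRels s I T1 T2) :
    ⁅T2 ^ 2, I⁆ = (1 - (s ^ 4)⁻¹) • (T2 ^ 2 * I) - ((s ^ 5)⁻¹ + s⁻¹) • (T1 * T2) := by
  simp only [Ring.lie_def, sq, mul_assoc, h.T2_mul_T1, h.I_mul_T2, h.I_mul_T2_mul, mul_add,
    smul_add, mul_smul_comm, smul_smul]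
  match_scalars <;> ring

theorem lie_T1_mul_T2_mul_I_I (hs : s ≠ 0) (h : NormalOrderRels s I T1 T2) :
    ⁅T1 * T2 * I, I⁆ = s • (T2 ^ 2 * I) - s • (T1 ^ 2 * I) := by
  simp only [Ring.lie_def, sq, mul_assoc, h.I_mul_T1_mul, h.I_mul_T2_mul, mul_add,
    smul_add, mul_smul_comm, smul_smul]
  match_scalars <;> field_simp
  ring

def casimir (s : K) (I T1 T2 : A) : A :=
  (s ^ 2)⁻¹ • T1 ^ 2 + s ^ 2 • T2 ^ 2 + ((s ^ 2)⁻¹ * s⁻¹ * (1 - (s ^ 2) ^ 2)) • (T1 * T2 * I)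

theorem lie_casimir_T1 (hs : s ≠ 0) (h : NormalOrderRels s I T1 T2) :
    ⁅casimir s I T1 T2, T1⁆ = 0 := by
  rw [casimir, add_lie, add_lie, smul_lie, smul_lie, smul_lie, (Commute.pow_self T1 2).lie_eq,
    lie_T2_sq_T1 h, lie_T1_mul_T2_mul_I_T1 hs h]
  match_scalars; field_simp; ring

theorem lie_casimir_T2 (hs : s ≠ 0) (h : NormalOrderRels s I T1 T2) :
    ⁅casimir s I T1 T2, T2⁆ = 0 := by
  rw [casimir, add_lie, add_lie, smul_lie, smul_lie, smul_lie, (Commute.pow_self T2 2).lie_eq,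
    lie_T1_sq_T2 h, lie_T1_mul_T2_mul_I_T2 h]
  match_scalars; field_simp; ring

theorem lie_casimir_I (hs : s ≠ 0) (h : NormalOrderRels s I T1 T2) :
    ⁅casimir s I T1 T2, I⁆ = 0 := by
  rw [casimir, add_lie, add_lie, smul_lie, smul_lie, smul_lie, lie_T1_sq_I hs h, lie_T2_sq_I h,
    lie_T1_mul_T2_mul_I_I hs h]
  match_scalars <;> field_simp <;> ring

end UqIso2

/-- The element C_q = q⁻¹T1² + qT2² + q^{-3/2}(1-q²)T1T2I belongs to the
center of U_q(iso₂): it commutes with each of the generators I, T1, T2. -/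
theorem stmt3 (q sq : ℂ) (hq : q ≠ 0) (hsq : sq ^ 2 = q)
    (A : Type*) [Ring A] [Algebra ℂ A] (I T1 T2 : A)
    (h1 : sq • (I * T2) - sq⁻¹ • (T2 * I) = T1)
    (h2 : sq • (T1 * I) - sq⁻¹ • (I * T1) = T2)
    (h3 : sq • (T2 * T1) - sq⁻¹ • (T1 * T2) = 0) :
    let Cq := q⁻¹ • T1 ^ 2 + q • T2 ^ 2 + ((q⁻¹ * sq⁻¹) * (1 - q ^ 2)) • (T1 * T2 * I)
    Cq * I = I * Cq ∧ Cq * T1 = T1 * Cq ∧ Cq * T2 = T2 * Cq := by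
  subst hsq
  have hs : sq ≠ 0 := by
    rintro rfl
    exact hq (zero_pow two_ne_zero)
  have h := UqIso2.NormalOrderRels.of_rels hs h1 h2 h3
  exact ⟨commute_iff_lie_eq.mpr (UqIso2.lie_casimir_I hs h),
    commute_iff_lie_eq.mpr (UqIso2.lie_casimir_T1 hs h),
    commute_iff_lie_eq.mpr (UqIso2.lie_casimir_T2 hs h)⟩
end

section
/- The element C_q := (1/2)(T1 T1' + T1' T1) + (1/2)(q+q^{-1}) T2^2, where T1' := q^{-1/2}I T2 - q^{1/2}T2 I, equals q^{-1}T1^2 + qT2^2 + q^{-3/2}(1-q^2)T1 T2 I in U_q(iso_2). -/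
/-!
Write `s = q^{1/2}`. The relations let one move `I` to the right: `I T2 = s⁻¹ T1 + q⁻¹ T2 I`,
so `T1' = q⁻¹ T1 + (s⁻³ - s) T2 I`, and `T2 I T1 = T1 T2 I - s T2²`. Hence the anticommutator
`T1 T1' + T1' T1` equals `2 q⁻¹ T1² + 2 (s⁻³ - s) T1 T2 I + (q - q⁻¹) T2²`, and adding
`(q + q⁻¹) T2²` turns the `T2²` term into `2 q T2²`.
-/

/-- `[I,T2]_q = T1`, `[T1,I]_q = T2`, `[T2,T1]_q = 0` with `[A,B]_q = s A B - s⁻¹ B A`,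
`s = q^{1/2}`. -/
structure UqIso2Relations {K A : Type*} [Field K] [Ring A] [Algebra K A]
    (s : K) (I T1 T2 : A) : Prop where
  bracket_I_T2 : s • (I * T2) - s⁻¹ • (T2 * I) = T1
  bracket_T1_I : s • (T1 * I) - s⁻¹ • (I * T1) = T2
  bracket_T2_T1 : s • (T2 * T1) - s⁻¹ • (T1 * T2) = 0

namespace UqIso2Relations

variable {K A : Type*} [Field K] [Ring A] [Algebra K A] {s : K} {I T1 T2 : A}

theorem I_mul_T2 (h : UqIso2Relations s I T1 T2) (hs : s ≠ 0) :
    I * T2 = s⁻¹ • T1 + (s ^ 2)⁻¹ • (T2 * I) := by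
  rw [← h.bracket_I_T2]
  match_scalars <;> field_simp; ring

theorem I_mul_T1 (h : UqIso2Relations s I T1 T2) (hs : s ≠ 0) :
    I * T1 = s ^ 2 • (T1 * I) - s • T2 := by
  rw [← h.bracket_T1_I]
  match_scalars <;> field_simp; ring

theorem T2_mul_T1 (h : UqIso2Relations s I T1 T2) (hs : s ≠ 0) :
    T2 * T1 = (s ^ 2)⁻¹ • (T1 * T2) := by
  have h' := congrArg (s⁻¹ • ·) (sub_eq_zero.mp h.bracket_T2_T1)
  simp only [smul_smul, inv_mul_cancel₀ hs, one_smul] at h'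
  rw [h', ← inv_pow, sq]

theorem T2_mul_I_mul_T1 (h : UqIso2Relations s I T1 T2) (hs : s ≠ 0) :
    T2 * I * T1 = T1 * T2 * I - s • T2 ^ 2 := by
  rw [mul_assoc, h.I_mul_T1 hs, mul_sub, mul_smul_comm, mul_smul_comm, ← mul_assoc,
    h.T2_mul_T1 hs, smul_mul_assoc, smul_smul, mul_inv_cancel₀ (pow_ne_zero 2 hs), one_smul,
    sq]

theorem dual_eq (h : UqIso2Relations s I T1 T2) (hs : s ≠ 0) :
    s⁻¹ • (I * T2) - s • (T2 * I) = (s ^ 2)⁻¹ • T1 + ((s ^ 3)⁻¹ - s) • (T2 * I) := by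
  rw [h.I_mul_T2 hs]
  match_scalars <;> field_simp

theorem anticomm_dual (h : UqIso2Relations s I T1 T2) (hs : s ≠ 0) :
    let T1' := s⁻¹ • (I * T2) - s • (T2 * I)
    T1 * T1' + T1' * T1 = (2 * (s ^ 2)⁻¹) • T1 ^ 2 + (2 * ((s ^ 3)⁻¹ - s)) • (T1 * T2 * I)
      + (s ^ 2 - (s ^ 2)⁻¹) • T2 ^ 2 := by
  intro T1'
  simp only [T1', h.dual_eq hs, mul_add, add_mul, mul_smul_comm, smul_mul_assoc, ← mul_assoc,
    h.T2_mul_I_mul_T1 hs, ← sq]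
  match_scalars <;> field_simp <;> ring

end UqIso2Relations

/-- In U_q(iso₂), with T1' := q^{-1/2}IT2 - q^{1/2}T2I, the element
C_q := (1/2)(T1T1' + T1'T1) + (1/2)(q+q⁻¹)T2² equals
q⁻¹T1² + qT2² + q^{-3/2}(1-q²)T1T2I. -/
theorem stmt4 (q sq : ℂ) (hq : q ≠ 0) (hsq : sq ^ 2 = q)
    (A : Type*) [Ring A] [Algebra ℂ A] (I T1 T2 : A)
    (h1 : sq • (I * T2) - sq⁻¹ • (T2 * I) = T1)
    (h2 : sq • (T1 * I) - sq⁻¹ • (I * T1) = T2)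
    (h3 : sq • (T2 * T1) - sq⁻¹ • (T1 * T2) = 0) :
    let T1' := sq⁻¹ • (I * T2) - sq • (T2 * I)
    (2 : ℂ)⁻¹ • (T1 * T1' + T1' * T1) + ((2 : ℂ)⁻¹ * (q + q⁻¹)) • T2 ^ 2 =
      q⁻¹ • T1 ^ 2 + q • T2 ^ 2 + ((q⁻¹ * sq⁻¹) * (1 - q ^ 2)) • (T1 * T2 * I) := by
  intro T1'
  subst hsq
  have hs : sq ≠ 0 := by rintro rfl; simp at hq
  rw [(UqIso2Relations.mk h1 h2 h3).anticomm_dual hs]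
  match_scalars <;> field_simp; ring
end

section
/- The monomials T1^j T2^k I^l for j,k,l = 0,1,2,... form a basis of the complex vector space U_q(iso_2) (Poincaré–Birkhoff–Witt theorem for U_q(iso_2)). -/
/-- The defining relations of U_q(iso₂) on the free algebra on three generators
(0 ↦ I, 1 ↦ T1, 2 ↦ T2), with sq playing the role of q^{1/2}. -/
inductive IsoRel (sq : ℂ) : FreeAlgebra ℂ (Fin 3) → FreeAlgebra ℂ (Fin 3) → Prop
  | rel1 : IsoRel sq
      (sq • (FreeAlgebra.ι ℂ (0 : Fin 3) * FreeAlgebra.ι ℂ (2 : Fin 3)) -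
        sq⁻¹ • (FreeAlgebra.ι ℂ (2 : Fin 3) * FreeAlgebra.ι ℂ (0 : Fin 3)))
      (FreeAlgebra.ι ℂ (1 : Fin 3))
  | rel2 : IsoRel sq
      (sq • (FreeAlgebra.ι ℂ (1 : Fin 3) * FreeAlgebra.ι ℂ (0 : Fin 3)) -
        sq⁻¹ • (FreeAlgebra.ι ℂ (0 : Fin 3) * FreeAlgebra.ι ℂ (1 : Fin 3)))
      (FreeAlgebra.ι ℂ (2 : Fin 3))
  | rel3 : IsoRel sq
      (sq • (FreeAlgebra.ι ℂ (2 : Fin 3) * FreeAlgebra.ι ℂ (1 : Fin 3)) -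
        sq⁻¹ • (FreeAlgebra.ι ℂ (1 : Fin 3) * FreeAlgebra.ι ℂ (2 : Fin 3)))
      0

/-- The algebra U_q(iso₂). -/
noncomputable abbrev UqIso2 (sq : ℂ) := RingQuot (IsoRel sq)

/-- The generators I, T1, T2 of U_q(iso₂). -/
noncomputable def gen (sq : ℂ) (i : Fin 3) : UqIso2 sq :=
  RingQuot.mkAlgHom ℂ (IsoRel sq) (FreeAlgebra.ι ℂ i)

/-!
Spanning: the relations rewrite `T2 T1`, `I T1` and `I T2` as combinations of words in which
`T1` stands left of `T2` and both stand left of `I`, so left multiplication by each generator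
keeps the span of the ordered monomials `T1^j T2^k I^l`; as it contains `1` and the generators
generate the algebra, it is everything. Independence: on the space with basis `e (j, k, l)`
the generators act as left multiplication would act on `T1^j T2^k I^l`; these operators satisfy
the defining relations, and the monomial `T1^j T2^k I^l` sends `e (0, 0, 0)` to `e (j, k, l)`.
-/

section OrderedMonomial

variable {K A : Type*} [CommRing K] [Ring A] [Algebra K A]

def orderedMonomial (x y z : A) (p : ℕ × ℕ × ℕ) : A := x ^ p.1 * y ^ p.2.1 * z ^ p.2.2

theorem mul_mem_span_range_of_forall {ι : Type*} {v : ι → A} {a : A}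
    (h : ∀ i, a * v i ∈ Submodule.span K (Set.range v)) {m : A}
    (hm : m ∈ Submodule.span K (Set.range v)) : a * m ∈ Submodule.span K (Set.range v) :=
  Submodule.span_le (p := (Submodule.span K (Set.range v)).comap (LinearMap.mulLeft K a)) |>.2
    (Set.range_subset_iff.2 h) hm

theorem mul_mem_of_mem_adjoin {M : Submodule K A} {s : Set A}
    (hs : ∀ g ∈ s, ∀ m ∈ M, g * m ∈ M) {a : A} (ha : a ∈ Algebra.adjoin K s) :
    ∀ m ∈ M, a * m ∈ M := by
  induction ha using Algebra.adjoin_induction with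
  | mem g hg => exact hs g hg
  | algebraMap r => exact fun m hm => by simpa only [← Algebra.smul_def] using M.smul_mem r hm
  | add a b _ _ ha hb =>
    exact fun m hm => by simpa only [add_mul] using M.add_mem (ha m hm) (hb m hm)
  | mul a b _ _ ha hb => exact fun m hm => by simpa only [mul_assoc] using ha _ (hb m hm)

theorem mul_pow_eq_smul_pow_mul {x y : A} {a : K} (h : y * x = a • (x * y)) (j : ℕ) :
    y * x ^ j = a ^ j • (x ^ j * y) := by
  induction j with
  | zero => simp
  | succ j ih =>
    rw [pow_succ, ← mul_assoc, ih, smul_mul_assoc, mul_assoc, h, mul_smul_comm, smul_smul,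
      ← mul_assoc, ← pow_succ, ← pow_succ]

variable {x y z : A}

theorem orderedMonomial_succ_fst (j k l : ℕ) :
    orderedMonomial x y z (j + 1, k, l) = x * orderedMonomial x y z (j, k, l) := by
  simp only [orderedMonomial, ← mul_assoc, ← pow_succ']

theorem orderedMonomial_zero_succ_snd (k l : ℕ) :
    orderedMonomial x y z (0, k + 1, l) = y * orderedMonomial x y z (0, k, l) := by
  simp only [orderedMonomial, pow_zero, one_mul, ← mul_assoc, ← pow_succ']

theorem orderedMonomial_zero_zero_succ (l : ℕ) :
    orderedMonomial x y z (0, 0, l + 1) = z * orderedMonomial x y z (0, 0, l) := by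
  simp only [orderedMonomial, pow_zero, one_mul, ← pow_succ']

theorem mul_orderedMonomial_eq_smul {a : K} (h : y * x = a • (x * y)) (j k l : ℕ) :
    y * orderedMonomial x y z (j, k, l) = a ^ j • orderedMonomial x y z (j, k + 1, l) := by
  simp only [orderedMonomial, ← mul_assoc, mul_pow_eq_smul_pow_mul h, smul_mul_assoc, pow_succ']

theorem mul_mem_span_orderedMonomial {a b c d e : K} (hyx : y * x = a • (x * y))
    (hzx : z * x = b • (x * z) + c • y) (hzy : z * y = d • (y * z) + e • x) :
    ∀ g ∈ ({x, y, z} : Set A), ∀ m ∈ Submodule.span K (Set.range (orderedMonomial x y z)),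
      g * m ∈ Submodule.span K (Set.range (orderedMonomial x y z)) := by
  set M := Submodule.span K (Set.range (orderedMonomial x y z))
  have mem (p) : orderedMonomial x y z p ∈ M := Submodule.subset_span (Set.mem_range_self p)
  have hx (m) (hm : m ∈ M) : x * m ∈ M :=
    mul_mem_span_range_of_forall (fun _ => by rw [← orderedMonomial_succ_fst]; exact mem _) hm
  have hy (m) (hm : m ∈ M) : y * m ∈ M :=
    mul_mem_span_range_of_forall
      (fun _ => by rw [mul_orderedMonomial_eq_smul hyx]; exact M.smul_mem _ (mem _)) hm
  have hz_mono (j k l : ℕ) : z * orderedMonomial x y z (j, k, l) ∈ M := by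
    induction j with
    | zero =>
      induction k with
      | zero => rw [← orderedMonomial_zero_zero_succ]; exact mem _
      | succ k ih =>
        rw [orderedMonomial_zero_succ_snd, ← mul_assoc, hzy, add_mul, smul_mul_assoc,
          smul_mul_assoc, mul_assoc]
        exact M.add_mem (M.smul_mem _ (hy _ ih)) (M.smul_mem _ (hx _ (mem _)))
    | succ j ih =>
      rw [orderedMonomial_succ_fst, ← mul_assoc, hzx, add_mul, smul_mul_assoc, smul_mul_assoc,
        mul_assoc]
      exact M.add_mem (M.smul_mem _ (hx _ ih)) (M.smul_mem _ (hy _ (mem _)))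
  rintro g (rfl | rfl | rfl)
  exacts [hx, hy, fun m => mul_mem_span_range_of_forall fun ⟨j, k, l⟩ => hz_mono j k l]

theorem span_orderedMonomial_eq_top {a b c d e : K} (hyx : y * x = a • (x * y))
    (hzx : z * x = b • (x * z) + c • y) (hzy : z * y = d • (y * z) + e • x)
    (hgen : Algebra.adjoin K {x, y, z} = ⊤) :
    Submodule.span K (Set.range (orderedMonomial x y z)) = ⊤ := by
  have one_mem : (1 : A) ∈ Submodule.span K (Set.range (orderedMonomial x y z)) :=
    Submodule.subset_span ⟨(0, 0, 0), by simp [orderedMonomial]⟩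
  refine Submodule.eq_top_iff'.2 fun u => ?_
  simpa using mul_mem_of_mem_adjoin (mul_mem_span_orderedMonomial hyx hzx hzy)
    (hgen ▸ Algebra.mem_top) 1 one_mem

end OrderedMonomial

section InvertedCoefficients

variable {K M : Type*} [Field K] [AddCommGroup M] [Module K M] {s : K}

theorem smul_sub_inv_smul_eq_iff_eq_add (hs : s ≠ 0) {u v w : M} :
    s • u - s⁻¹ • v = w ↔ u = (s ^ 2)⁻¹ • v + s⁻¹ • w := by
  constructor <;> rintro rfl <;> match_scalars <;> field_simp <;> ring

theorem smul_sub_inv_smul_eq_iff_eq_add' (hs : s ≠ 0) {u v w : M} :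
    s • u - s⁻¹ • v = w ↔ v = s ^ 2 • u + (-s) • w := by
  constructor <;> rintro rfl <;> match_scalars <;> field_simp <;> ring

end InvertedCoefficients

namespace UqIso2

variable {s : ℂ} {R : Type*} [Ring R] [Algebra ℂ R]

def IsoRelations (s : ℂ) (i t1 t2 : R) : Prop :=
  s • (i * t2) - s⁻¹ • (t2 * i) = t1 ∧ s • (t1 * i) - s⁻¹ • (i * t1) = t2 ∧
    s • (t2 * t1) - s⁻¹ • (t1 * t2) = 0

theorem isoRelations_iff (hs : s ≠ 0) {i t1 t2 : R} :
    IsoRelations s i t1 t2 ↔ t2 * t1 = (s ^ 2)⁻¹ • (t1 * t2) ∧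
      i * t1 = s ^ 2 • (t1 * i) + (-s) • t2 ∧ i * t2 = (s ^ 2)⁻¹ • (t2 * i) + s⁻¹ • t1 := by
  rw [IsoRelations, smul_sub_inv_smul_eq_iff_eq_add hs, smul_sub_inv_smul_eq_iff_eq_add' hs,
    smul_sub_inv_smul_eq_iff_eq_add hs, smul_zero, add_zero]
  tauto

theorem isoRelations_gen (s : ℂ) : IsoRelations s (gen s 0) (gen s 1) (gen s 2) := by
  refine ⟨?_, ?_, ?_⟩
  · simpa only [map_sub, map_smul, map_mul, gen] using
      RingQuot.mkAlgHom_rel ℂ (IsoRel.rel1 (sq := s))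
  · simpa only [map_sub, map_smul, map_mul, gen] using
      RingQuot.mkAlgHom_rel ℂ (IsoRel.rel2 (sq := s))
  · simpa only [map_sub, map_smul, map_mul, map_zero, gen] using
      RingQuot.mkAlgHom_rel ℂ (IsoRel.rel3 (sq := s))

def lift {i t1 t2 : R} (h : IsoRelations s i t1 t2) : UqIso2 s →ₐ[ℂ] R :=
  RingQuot.liftAlgHom ℂ ⟨FreeAlgebra.lift ℂ ![i, t1, t2], fun _ _ hr => by
    cases hr <;> simp [h.1, h.2.1, h.2.2]⟩

theorem lift_gen {i t1 t2 : R} (h : IsoRelations s i t1 t2) (n : Fin 3) :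
    lift h (gen s n) = ![i, t1, t2] n := by
  rw [lift, gen, RingQuot.liftAlgHom_mkAlgHom_apply, FreeAlgebra.lift_ι_apply]

theorem adjoin_gen_eq_top (s : ℂ) : Algebra.adjoin ℂ {gen s 1, gen s 2, gen s 0} = ⊤ := by
  have hlift : FreeAlgebra.lift ℂ (gen s) = RingQuot.mkAlgHom ℂ (IsoRel s) := by
    ext; simp [gen]
  refine top_unique <| le_of_eq_of_le ?_ (Algebra.adjoin_mono (s := Set.range (gen s)) ?_)
  · rw [Algebra.adjoin_range_eq_range_freeAlgebra_lift, hlift,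
      (AlgHom.range_eq_top _).2 (RingQuot.mkAlgHom_surjective ℂ _)]
  · rintro _ ⟨i, rfl⟩
    fin_cases i <;> simp

theorem span_orderedMonomial_gen_eq_top (hs : s ≠ 0) :
    Submodule.span ℂ (Set.range (orderedMonomial (gen s 1) (gen s 2) (gen s 0))) = ⊤ :=
  have ⟨h21, h01, h02⟩ := (isoRelations_iff hs).1 (isoRelations_gen s)
  span_orderedMonomial_eq_top h21 h01 h02 (adjoin_gen_eq_top s)

/- With `q = s ^ 2`, these are the coefficients in `I T1^j = q^j T1^j I - c_j T1^(j-1) T2` and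
`I T2^k = q^(-k) T2^k I + d_k T1 T2^(k-1)`. -/
noncomputable def commCoeffT1 (s : ℂ) : ℕ → ℂ
  | 0 => 0
  | j + 1 => s ^ 2 * commCoeffT1 s j + s * (s ^ 2)⁻¹ ^ j

noncomputable def commCoeffT2 (s : ℂ) : ℕ → ℂ
  | 0 => 0
  | k + 1 => (s ^ 2)⁻¹ ^ 2 * commCoeffT2 s k + s⁻¹

local notation "𝐞" => (Finsupp.basisSingleOne : Module.Basis (ℕ × ℕ × ℕ) ℂ ((ℕ × ℕ × ℕ) →₀ ℂ))

noncomputable def opT1 : Module.End ℂ ((ℕ × ℕ × ℕ) →₀ ℂ) :=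
  𝐞.constr ℂ fun p => 𝐞 (p.1 + 1, p.2.1, p.2.2)

noncomputable def opT2 (s : ℂ) : Module.End ℂ ((ℕ × ℕ × ℕ) →₀ ℂ) :=
  𝐞.constr ℂ fun p => (s ^ 2)⁻¹ ^ p.1 • 𝐞 (p.1, p.2.1 + 1, p.2.2)

/- `I T1^j T2^k I^l = q^(j-k) T1^j T2^k I^(l+1) + q^j d_k T1^(j+1) T2^(k-1) I^l
- c_j T1^(j-1) T2^(k+1) I^l`; the last two terms make up `opICorr`. When `j - 1` or `k - 1`
truncates, the term carries the coefficient `c_0 = 0` or `d_0 = 0`. -/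
noncomputable def opILead (s : ℂ) : Module.End ℂ ((ℕ × ℕ × ℕ) →₀ ℂ) :=
  𝐞.constr ℂ fun p => ((s ^ 2) ^ p.1 * (s ^ 2)⁻¹ ^ p.2.1) • 𝐞 (p.1, p.2.1, p.2.2 + 1)

noncomputable def opICorr (s : ℂ) : Module.End ℂ ((ℕ × ℕ × ℕ) →₀ ℂ) :=
  𝐞.constr ℂ fun p => ((s ^ 2) ^ p.1 * commCoeffT2 s p.2.1) • 𝐞 (p.1 + 1, p.2.1 - 1, p.2.2) -
    commCoeffT1 s p.1 • 𝐞 (p.1 - 1, p.2.1 + 1, p.2.2)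

noncomputable def opI (s : ℂ) : Module.End ℂ ((ℕ × ℕ × ℕ) →₀ ℂ) := opILead s + opICorr s

@[simp] theorem opT1_basis (j k l : ℕ) : opT1 (𝐞 (j, k, l)) = 𝐞 (j + 1, k, l) := by
  simp only [opT1, Module.Basis.constr_basis]

@[simp] theorem opT2_basis (j k l : ℕ) :
    opT2 s (𝐞 (j, k, l)) = (s ^ 2)⁻¹ ^ j • 𝐞 (j, k + 1, l) := by
  simp only [opT2, Module.Basis.constr_basis]

@[simp] theorem opILead_basis (j k l : ℕ) :
    opILead s (𝐞 (j, k, l)) = ((s ^ 2) ^ j * (s ^ 2)⁻¹ ^ k) • 𝐞 (j, k, l + 1) := by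
  simp only [opILead, Module.Basis.constr_basis]

@[simp] theorem opICorr_basis (j k l : ℕ) :
    opICorr s (𝐞 (j, k, l)) = ((s ^ 2) ^ j * commCoeffT2 s k) • 𝐞 (j + 1, k - 1, l) -
      commCoeffT1 s j • 𝐞 (j - 1, k + 1, l) := by
  simp only [opICorr, Module.Basis.constr_basis]

theorem opT2_mul_opT1 : opT2 s * opT1 = (s ^ 2)⁻¹ • (opT1 * opT2 s) := by
  refine 𝐞.ext fun ⟨j, k, l⟩ => ?_
  simp only [Module.End.mul_apply, LinearMap.smul_apply, opT1_basis, opT2_basis, map_smul]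
  module

theorem opILead_mul_opT1 : opILead s * opT1 = s ^ 2 • (opT1 * opILead s) := by
  refine 𝐞.ext fun ⟨j, k, l⟩ => ?_
  simp only [Module.End.mul_apply, LinearMap.smul_apply, opT1_basis, opILead_basis, map_smul]
  module

theorem opILead_mul_opT2 : opILead s * opT2 s = (s ^ 2)⁻¹ • (opT2 s * opILead s) := by
  refine 𝐞.ext fun ⟨j, k, l⟩ => ?_
  simp only [Module.End.mul_apply, LinearMap.smul_apply, opT2_basis, opILead_basis, map_smul]
  module

theorem opICorr_mul_opT1 : opICorr s * opT1 = s ^ 2 • (opT1 * opICorr s) + (-s) • opT2 s := by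
  refine 𝐞.ext fun ⟨j, k, l⟩ => ?_
  simp only [Module.End.mul_apply, LinearMap.smul_apply, LinearMap.add_apply, opT1_basis,
    opT2_basis, opICorr_basis, map_smul, map_sub, add_tsub_cancel_right]
  cases j with
  | zero => simp only [commCoeffT1, zero_smul, sub_zero]; module
  | succ j => simp only [commCoeffT1, add_tsub_cancel_right]; module

theorem opICorr_mul_opT2 (hs : s ≠ 0) :
    opICorr s * opT2 s = (s ^ 2)⁻¹ • (opT2 s * opICorr s) + s⁻¹ • opT1 := by
  refine 𝐞.ext fun ⟨j, k, l⟩ => ?_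
  simp only [Module.End.mul_apply, LinearMap.smul_apply, LinearMap.add_apply, opT1_basis,
    opT2_basis, opICorr_basis, map_smul, map_sub, add_tsub_cancel_right]
  rcases j with _ | j <;> rcases k with _ | k <;>
    simp only [commCoeffT1, commCoeffT2, add_tsub_cancel_right, zero_smul, smul_zero, sub_zero,
      mul_zero] <;>
    match_scalars <;> simp only [inv_pow] <;> field_simp <;> ring

theorem isoRelations_op (hs : s ≠ 0) : IsoRelations s (opI s) opT1 (opT2 s) := by
  refine (isoRelations_iff hs).2 ⟨opT2_mul_opT1, ?_, ?_⟩
  · rw [opI, add_mul, mul_add, opILead_mul_opT1, opICorr_mul_opT1]; module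
  · rw [opI, add_mul, mul_add, opILead_mul_opT2, opICorr_mul_opT2 hs]; module

noncomputable def regularRep (hs : s ≠ 0) : UqIso2 s →ₐ[ℂ] Module.End ℂ ((ℕ × ℕ × ℕ) →₀ ℂ) :=
  lift (isoRelations_op hs)

theorem opI_pow_basis (l : ℕ) : (opI s ^ l) (𝐞 (0, 0, 0)) = 𝐞 (0, 0, l) := by
  induction l with
  | zero => rfl
  | succ l ih =>
    rw [pow_succ', Module.End.mul_apply, ih, opI, LinearMap.add_apply, opILead_basis,
      opICorr_basis]
    simp [commCoeffT1, commCoeffT2]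

theorem opT2_pow_basis (k l : ℕ) : (opT2 s ^ k) (𝐞 (0, 0, l)) = 𝐞 (0, k, l) := by
  induction k with
  | zero => rfl
  | succ k ih => rw [pow_succ', Module.End.mul_apply, ih, opT2_basis, pow_zero, one_smul]

theorem opT1_pow_basis (j k l : ℕ) : (opT1 ^ j) (𝐞 (0, k, l)) = 𝐞 (j, k, l) := by
  induction j with
  | zero => rfl
  | succ j ih => rw [pow_succ', Module.End.mul_apply, ih, opT1_basis]

theorem regularRep_orderedMonomial (hs : s ≠ 0) (p : ℕ × ℕ × ℕ) :
    regularRep hs (orderedMonomial (gen s 1) (gen s 2) (gen s 0) p) (𝐞 (0, 0, 0)) = 𝐞 p := by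
  obtain ⟨j, k, l⟩ := p
  simp only [orderedMonomial, regularRep, map_mul, map_pow, lift_gen]
  show (opT1 ^ j * opT2 s ^ k * opI s ^ l) (𝐞 (0, 0, 0)) = 𝐞 (j, k, l)
  rw [Module.End.mul_apply, Module.End.mul_apply, opI_pow_basis, opT2_pow_basis, opT1_pow_basis]

theorem linearIndependent_orderedMonomial_gen (hs : s ≠ 0) :
    LinearIndependent ℂ (orderedMonomial (gen s 1) (gen s 2) (gen s 0)) := by
  refine LinearIndependent.of_comp
    ((LinearMap.applyₗ (𝐞 (0, 0, 0))).comp (regularRep hs).toLinearMap) ?_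
  convert 𝐞.linearIndependent using 1
  exact funext (regularRep_orderedMonomial hs)

end UqIso2

/-- PBW theorem for U_q(iso₂): the monomials T1^j T2^k I^l,
j,k,l = 0,1,2,…, form a basis of the complex vector space U_q(iso₂). -/
theorem stmt5 (q sq : ℂ) (hq : q ≠ 0) (hsq : sq ^ 2 = q) :
    ∃ B : Module.Basis (ℕ × ℕ × ℕ) ℂ (UqIso2 sq),
      ∀ j k l : ℕ, B (j, k, l) = (gen sq 1) ^ j * (gen sq 2) ^ k * (gen sq 0) ^ l := by
  have hs : sq ≠ 0 := (pow_ne_zero_iff two_ne_zero).1 (hsq ▸ hq)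
  exact ⟨.mk (UqIso2.linearIndependent_orderedMonomial_gen hs)
    (UqIso2.span_orderedMonomial_gen_eq_top hs).ge, fun j k l => Module.Basis.mk_apply _ _ _⟩
end

section
/- The representation R_{rs} of U_q(iso_2) is irreducible provided s ≠ ±i q^{m+1/2} for all integers m: every nonzero invariant subspace of the span of the basis vectors {|m⟩ : m ∈ Z} equals the whole span. -/
noncomputable section

/-- The basis vector |m⟩, m ∈ ℤ. -/
def e (m : ℤ) : ℤ →₀ ℂ := Finsupp.single m 1

/-- A linear operator on the space with basis {|m⟩ : m ∈ ℤ}, given by its values on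
the basis vectors. -/
def op (f : ℤ → (ℤ →₀ ℂ)) : (ℤ →₀ ℂ) →ₗ[ℂ] (ℤ →₀ ℂ) :=
  Finsupp.lift _ _ _ f

variable (q sq r s : ℂ)

/-- R(I)|m⟩ = i((sqᵐ - s⁻¹q⁻ᵐ)/(q-q⁻¹))|m⟩. -/
def RI : (ℤ →₀ ℂ) →ₗ[ℂ] (ℤ →₀ ℂ) :=
  op fun m => (Complex.I * (s * q ^ m - s⁻¹ * q ^ (-m)) / (q - q⁻¹)) • e m

/-- R(T2)|m⟩ = (r/(sqᵐ + s⁻¹q⁻ᵐ))(|m+1⟩ + |m-1⟩). -/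
def RT2 : (ℤ →₀ ℂ) →ₗ[ℂ] (ℤ →₀ ℂ) :=
  op fun m => (r / (s * q ^ m + s⁻¹ * q ^ (-m))) • (e (m + 1) + e (m - 1))

/-- R(T1)|m⟩ = (i q^{1/2} r/(sqᵐ + s⁻¹q⁻ᵐ))(sqᵐ|m+1⟩ - s⁻¹q⁻ᵐ|m-1⟩),
where sq = q^{1/2}. -/
def RT1 : (ℤ →₀ ℂ) →ₗ[ℂ] (ℤ →₀ ℂ) :=
  op fun m => (Complex.I * sq * r / (s * q ^ m + s⁻¹ * q ^ (-m))) •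
    ((s * q ^ m) • e (m + 1) - (s⁻¹ * q ^ (-m)) • e (m - 1))

end

/-! R(I) is diagonal in the basis |m⟩ with eigenvalues i(sqᵐ - s⁻¹q⁻ᵐ)/(q - q⁻¹). Two of them,
for m ≠ n, agree only if s²q^{m+n} = -1, i.e. s = ±i q^{-(m+n)/2}, which the hypotheses exclude.
With pairwise distinct eigenvalues, an invariant subspace contains |n⟩ for every n in the support
of one of its vectors. As R(T2)|m⟩ is a nonzero multiple of |m+1⟩ + |m-1⟩, a nonzero invariant
subspace then contains every basis vector. -/

open Finsupp

namespace Submodule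

variable {α K : Type*} [Field K]

/-- Subtracting `μ b • x` from `T x` kills the `b`-coordinate of `x` and rescales the others by
nonzero factors, which allows induction on the size of the support. -/
theorem single_one_mem_of_mem_support {T : (α →₀ K) →ₗ[K] α →₀ K} {μ : α → K}
    (hμ : Function.Injective μ) (hT : ∀ x a, T x a = μ a * x a) {W : Submodule K (α →₀ K)}
    (hW : ∀ x ∈ W, T x ∈ W) {x : α →₀ K} (hx : x ∈ W) {a : α} (ha : a ∈ x.support) :
    single a 1 ∈ W := by
  classical
  induction hN : x.support.card using Nat.strong_induction_on generalizing x with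
  | _ N ih =>
  rcases x.support.eq_singleton_or_nontrivial ha with hsupp | hsupp
  · obtain ⟨hxa, hx_eq⟩ := support_eq_singleton.mp hsupp
    have hx_smul : (x a)⁻¹ • x = single a 1 := by
      rw [hx_eq, smul_single, smul_eq_mul, single_eq_same, inv_mul_cancel₀ hxa]
    exact hx_smul ▸ W.smul_mem _ hx
  · obtain ⟨b, hb, hba⟩ := hsupp.exists_ne a
    set y := T x - μ b • x
    have hy : ∀ c, y c = (μ c - μ b) * x c := fun c => by
      simp only [y, Finsupp.coe_sub, Finsupp.coe_smul, Pi.sub_apply, Pi.smul_apply, hT, smul_eq_mul]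
      ring
    have hy_supp : y.support ⊆ x.support.erase b := fun c hc => by
      rw [mem_support_iff, hy] at hc
      refine Finset.mem_erase.2 ⟨?_, mem_support_iff.2 (right_ne_zero_of_mul hc)⟩
      rintro rfl
      simp at hc
    have hya : a ∈ y.support := by
      rw [mem_support_iff, hy]
      exact mul_ne_zero (sub_ne_zero.2 (hμ.ne hba.symm)) (mem_support_iff.1 ha)
    refine ih _ ?_ (W.sub_mem (hW x hx) (W.smul_mem _ hx)) hya rfl
    exact hN ▸ (Finset.card_le_card hy_supp).trans_lt (Finset.card_erase_lt_of_mem hb)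

theorem eq_top_of_forall_single_one_mem {W : Submodule K (α →₀ K)} (h : ∀ a, single a 1 ∈ W) :
    W = ⊤ := by
  rw [eq_top_iff, ← Finsupp.basisSingleOne.span_eq, span_le, coe_basisSingleOne]
  exact Set.range_subset_iff.2 h

end Submodule

theorem zpow_ne_one_of_pow_ne_one {M : Type*} [DivisionMonoid M] {q : M}
    (hroot : ∀ n : ℕ, n ≠ 0 → q ^ n ≠ 1) {k : ℤ} (hk : k ≠ 0) :
    q ^ k ≠ 1 := by
  intro h
  refine hroot k.natAbs (Int.natAbs_ne_zero.2 hk) ?_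
  rcases k.natAbs_eq with hk' | hk'
  · rwa [hk', zpow_natCast] at h
  · rwa [hk', zpow_neg, inv_eq_one, zpow_natCast] at h

section Parameters

variable {q sq s : ℂ}

theorem sq_mul_zpow_ne_neg_one (hq : q ≠ 0) (hsq : sq ^ 2 = q)
    (hsi : ∀ n : ℤ, s ≠ Complex.I * q ^ n ∧ s ≠ -(Complex.I * q ^ n))
    (hsi2 : ∀ n : ℤ, s ≠ Complex.I * q ^ n * sq ∧ s ≠ -(Complex.I * q ^ n * sq)) (t : ℤ) :
    s ^ 2 * q ^ t ≠ -1 := by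
  intro ht
  have hI : (-1 : ℂ) = Complex.I ^ 2 := Complex.I_sq.symm
  rcases t.even_or_odd' with ⟨k, rfl | rfl⟩
  · have hs : s = s * q ^ k * q ^ (-k) := by
      rw [mul_assoc, ← zpow_add₀ hq, add_neg_cancel, zpow_zero, mul_one]
    have hsqrt : (s * q ^ k) ^ 2 = Complex.I ^ 2 := by
      rw [← hI, ← ht, two_mul, zpow_add₀ hq]; ring
    rcases sq_eq_sq_iff_eq_or_eq_neg.1 hsqrt with h | h
    · exact (hsi (-k)).1 (by rw [hs, h])
    · exact (hsi (-k)).2 (by rw [hs, h, neg_mul])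
  · have hs : s = s * q ^ k * sq * q ^ (-k - 1) * sq := by
      rw [show s * q ^ k * sq * q ^ (-k - 1) * sq = s * (q ^ k * sq ^ 2 * q ^ (-k - 1)) by ring,
        hsq, ← zpow_add_one₀ hq, ← zpow_add₀ hq, show k + 1 + (-k - 1) = 0 by ring, zpow_zero,
        mul_one]
    have hsqrt : (s * q ^ k * sq) ^ 2 = Complex.I ^ 2 := by
      rw [← hI, ← ht, zpow_add_one₀ hq, two_mul, zpow_add₀ hq, ← hsq]; ring
    rcases sq_eq_sq_iff_eq_or_eq_neg.1 hsqrt with h | h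
    · exact (hsi2 (-k - 1)).1 (by rw [hs, h])
    · exact (hsi2 (-k - 1)).2 (by rw [hs, h, neg_mul, neg_mul])

theorem mul_zpow_add_inv_mul_zpow_neg_ne_zero (hq : q ≠ 0) (hs : s ≠ 0)
    (hneg : ∀ t : ℤ, s ^ 2 * q ^ t ≠ -1) (m : ℤ) :
    s * q ^ m + s⁻¹ * q ^ (-m) ≠ 0 := by
  intro h
  apply hneg (m + m)
  rw [zpow_neg] at h
  have hqm : q ^ m ≠ 0 := zpow_ne_zero m hq
  field_simp at h
  rw [zpow_add₀ hq]
  linear_combination h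

theorem RI_eigenvalue_injective (hq : q ≠ 0) (hroot : ∀ n : ℕ, n ≠ 0 → q ^ n ≠ 1) (hs : s ≠ 0)
    (hneg : ∀ t : ℤ, s ^ 2 * q ^ t ≠ -1) :
    Function.Injective fun n : ℤ => Complex.I * (s * q ^ n - s⁻¹ * q ^ (-n)) / (q - q⁻¹) := by
  intro m n h
  by_contra hmn
  have hq2 : q - q⁻¹ ≠ 0 := by
    intro h2
    field_simp at h2
    exact hroot 2 two_ne_zero (by linear_combination h2)
  have hmn' : q ^ m - q ^ n ≠ 0 := by
    rw [sub_ne_zero, Ne, ← div_eq_one_iff_eq (zpow_ne_zero n hq), ← zpow_sub₀ hq]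
    exact zpow_ne_one_of_pow_ne_one hroot (sub_ne_zero.2 hmn)
  apply hneg (m + n)
  have hqm : q ^ m ≠ 0 := zpow_ne_zero m hq
  have hqn : q ^ n ≠ 0 := zpow_ne_zero n hq
  have h' := mul_left_cancel₀ Complex.I_ne_zero ((div_left_inj' hq2).1 h)
  simp only [zpow_neg] at h'
  field_simp at h'
  rw [zpow_add₀ hq, ← add_eq_zero_iff_eq_neg]
  refine (mul_eq_zero.1 ?_).resolve_left hmn'
  linear_combination h'

end Parameters

theorem op_e (f : ℤ → ℤ →₀ ℂ) (m : ℤ) : op f (e m) = f m := by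
  simp [op, e]

theorem op_smul_e_apply (μ : ℤ → ℂ) (x : ℤ →₀ ℂ) (n : ℤ) :
    op (fun m => μ m • e m) x n = μ n * x n := by
  induction x using induction_linear with
  | zero => simp
  | add x y hx hy => simp [hx, hy, mul_add]
  | single m c => by_cases h : m = n <;> simp [op, e, h, mul_comm]

theorem mem_support_RT2_e {q r s : ℂ} (hr : r ≠ 0) {m : ℤ}
    (hD : s * q ^ m + s⁻¹ * q ^ (-m) ≠ 0) {n : ℤ} (hn : n = m + 1 ∨ n = m - 1) :
    n ∈ (RT2 q r s (e m)).support := by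
  have hm : m + 1 ≠ m - 1 := by omega
  rw [zpow_neg] at hD
  rw [RT2, op_e, mem_support_iff]
  rcases hn with rfl | rfl <;> simp [e, hm, hm.symm, hr, hD]

/-- The representation R_{rs} is irreducible provided s ≠ ±i q^{m+1/2}
for all integers m: every nonzero invariant subspace of the span of the basis
vectors {|m⟩ : m ∈ ℤ} (which is the whole space ℤ →₀ ℂ) equals the whole span. -/
theorem stmt7 (q sq r s : ℂ) (hq : q ≠ 0) (hsq : sq ^ 2 = q)
    (hroot : ∀ n : ℕ, n ≠ 0 → q ^ n ≠ 1)
    (hr : r ≠ 0) (hs : s ≠ 0)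
    (hsi : ∀ n : ℤ, s ≠ Complex.I * q ^ n ∧ s ≠ -(Complex.I * q ^ n))
    (hsi2 : ∀ n : ℤ, s ≠ Complex.I * q ^ n * sq ∧ s ≠ -(Complex.I * q ^ n * sq)) :
    ∀ W : Submodule ℂ (ℤ →₀ ℂ),
      (∀ x ∈ W, RI q s x ∈ W ∧ RT1 q sq r s x ∈ W ∧ RT2 q r s x ∈ W) →
      W ≠ ⊥ → W = ⊤ := by
  intro W hW hW_ne
  have hneg := sq_mul_zpow_ne_neg_one hq hsq hsi hsi2
  have e_mem : ∀ x ∈ W, ∀ n ∈ x.support, e n ∈ W := fun x hx n hn =>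
    Submodule.single_one_mem_of_mem_support (RI_eigenvalue_injective hq hroot hs hneg)
      (op_smul_e_apply _) (fun y hy => (hW y hy).1) hx hn
  have e_mem_of_adjacent {m n : ℤ} (hm : e m ∈ W) (hn : n = m + 1 ∨ n = m - 1) : e n ∈ W :=
    e_mem _ (hW _ hm).2.2 n
      (mem_support_RT2_e hr (mul_zpow_add_inv_mul_zpow_neg_ne_zero hq hs hneg m) hn)
  obtain ⟨x, hx, hx_ne⟩ := W.ne_bot_iff.1 hW_ne
  obtain ⟨m₀, hm₀⟩ := support_nonempty_iff.2 hx_ne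
  refine Submodule.eq_top_of_forall_single_one_mem fun n => ?_
  induction n using Int.inductionOn' (b := m₀) with
  | zero => exact e_mem x hx m₀ hm₀
  | succ k _ hk => exact e_mem_of_adjacent hk (.inl rfl)
  | pred k _ hk => exact e_mem_of_adjacent hk (.inr rfl)
end

section
/- The map sending I ↦ (i/(q-q^{-1}))(q^H - q^{-H}), T2 ↦ (E-F)(q^H+q^{-H})^{-1}, T1 ↦ (i q^{H-1/2}E + i q^{-H-1/2}F)(q^H+q^{-H})^{-1} extends to an algebra homomorphism ψ : U_q(iso_2) → Û_q(m_2); in particular the images satisfy q^{1/2}ψ(T2)ψ(T1) - q^{-1/2}ψ(T1)ψ(T2) = 0. -/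
/-!
The factor `c = (q^H + q^{-H})⁻¹` commutes with `K = q^H` and `Kinv = q^{-H}`, so the first
two relations reduce to identities in `K^{±1}, E, F` alone: the q-commutator with `K - Kinv`
multiplies `E` and `F` by the q-number `q - q⁻¹`, which the prefactor `i / (q - q⁻¹)` of
`ψ(I)` cancels. For the third relation, moving `c` past `E` and `F` turns it into
`(q^{±1} K + q^{∓1} Kinv)⁻¹`; the `E²` and `F²` terms cancel, and what remains is
`EF ((q⁻¹ K + q Kinv) (q⁻¹ K + q Kinv)⁻¹ - (q K + q⁻¹ Kinv) (q K + q⁻¹ Kinv)⁻¹) c = 0`.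
-/

theorem mul_mul_eq_mul_of_mul_eq {M : Type*} [Semigroup M] {a b c : M} (h : a * b = c) (x : M) :
    a * (b * x) = c * x := by
  rw [← mul_assoc, h]

section QCommutator

variable {A : Type*} [Ring A] [Algebra ℂ A]

/-- The q-commutator `[a, b]_q` with `s = q^{1/2}`. -/
noncomputable def qComm (s : ℂ) (a b : A) : A := s • (a * b) - s⁻¹ • (b * a)

variable {s : ℂ} {a b c : A}

theorem qComm_smul_left (r : ℂ) : qComm s (r • a) b = r • qComm s a b := by
  simp only [qComm, smul_mul_assoc, mul_smul_comm, smul_sub, smul_comm r]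

theorem qComm_smul_right (r : ℂ) : qComm s a (r • b) = r • qComm s a b := by
  simp only [qComm, smul_mul_assoc, mul_smul_comm, smul_sub, smul_comm r]

theorem qComm_mul_right_of_commute (h : Commute a c) : qComm s a (b * c) = qComm s a b * c := by
  simp only [qComm, sub_mul, smul_mul_assoc, mul_assoc, h.eq]

theorem qComm_mul_left_of_commute (h : Commute a c) : qComm s (b * c) a = qComm s b a * c := by
  simp only [qComm, sub_mul, smul_mul_assoc, mul_assoc, h.eq]

end QCommutator

section Conjugation

variable {A : Type*} [Ring A] [Algebra ℂ A] {K Kinv X : A} {t : ℂ}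

theorem mul_inv_eq_smul_inv_mul_of_conj (hKK' : Kinv * K = 1) (h : K * X * Kinv = t • X) :
    X * Kinv = t • (Kinv * X) := by
  rw [← mul_smul_comm, ← h, ← mul_assoc, ← mul_assoc, hKK', one_mul]

theorem mul_eq_smul_mul_of_conj (hKK' : Kinv * K = 1) (ht : t ≠ 0) (h : K * X * Kinv = t • X) :
    X * K = t⁻¹ • (K * X) := by
  have : K * X = t • (X * K) := by
    rw [← smul_mul_assoc, ← h, mul_assoc _ Kinv, hKK', mul_one]
  rw [this, inv_smul_smul₀ ht]

end Conjugation

section UqM2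

variable {A : Type*} [Ring A] [Algebra ℂ A]

/-- The relations of `U_q(m₂)` at `q = s ^ 2` for `K = q^H` and `Kinv = q^{-H}`, oriented so that
`K^{±1}` moves to the left of `E` and `F`. -/
structure UqM2Relations (s : ℂ) (K Kinv E F : A) : Prop where
  mul_inv : K * Kinv = 1
  inv_mul : Kinv * K = 1
  E_mul_K : E * K = (s ^ 2)⁻¹ • (K * E)
  E_mul_Kinv : E * Kinv = s ^ 2 • (Kinv * E)
  F_mul_K : F * K = s ^ 2 • (K * F)
  F_mul_Kinv : F * Kinv = (s ^ 2)⁻¹ • (Kinv * F)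
  F_mul_E : F * E = E * F

variable {s : ℂ} {K Kinv E F : A}

theorem UqM2Relations.of_conj (hs : s ≠ 0) (hKK : K * Kinv = 1) (hKK' : Kinv * K = 1)
    (hKE : K * E * Kinv = s ^ 2 • E) (hKF : K * F * Kinv = (s ^ 2)⁻¹ • F)
    (hEF : E * F = F * E) : UqM2Relations s K Kinv E F where
  mul_inv := hKK
  inv_mul := hKK'
  E_mul_K := mul_eq_smul_mul_of_conj hKK' (pow_ne_zero 2 hs) hKE
  E_mul_Kinv := mul_inv_eq_smul_inv_mul_of_conj hKK' hKE
  F_mul_K := by simpa using mul_eq_smul_mul_of_conj hKK' (inv_ne_zero (pow_ne_zero 2 hs)) hKF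
  F_mul_Kinv := mul_inv_eq_smul_inv_mul_of_conj hKK' hKF
  F_mul_E := hEF.symm

-- `ψ(I)`, `ψ(T₂)`, `ψ(T₁)`, with `c` standing for `(q^H + q^{-H})⁻¹`.
noncomputable def psiI (s : ℂ) (K Kinv : A) : A :=
  (Complex.I / (s ^ 2 - (s ^ 2)⁻¹)) • (K - Kinv)

def psiT2 (E F c : A) : A := (E - F) * c

noncomputable def psiT1 (s : ℂ) (K Kinv E F c : A) : A :=
  (Complex.I * s⁻¹) • ((K * E + Kinv * F) * c)

namespace UqM2Relations

theorem qComm_K_sub_Kinv_E_sub_F (h : UqM2Relations s K Kinv E F) :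
    qComm s (K - Kinv) (E - F) = (s⁻¹ * (s ^ 2 - (s ^ 2)⁻¹)) • (K * E + Kinv * F) := by
  simp only [qComm, mul_sub, sub_mul, smul_sub, h.E_mul_K, h.E_mul_Kinv, h.F_mul_K, h.F_mul_Kinv]
  match_scalars <;> field_simp <;> ring

theorem qComm_KE_add_KinvF_K_sub_Kinv (h : UqM2Relations s K Kinv E F) :
    qComm s (K * E + Kinv * F) (K - Kinv) = (-s * (s ^ 2 - (s ^ 2)⁻¹)) • (E - F) := by
  simp only [qComm, mul_sub, sub_mul, mul_add, add_mul, smul_sub, smul_add, mul_smul_comm,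
    smul_smul, mul_assoc, h.E_mul_K, h.E_mul_Kinv, h.F_mul_K, h.F_mul_Kinv,
    mul_mul_eq_mul_of_mul_eq h.mul_inv, mul_mul_eq_mul_of_mul_eq h.inv_mul, one_mul]
  match_scalars <;> field_simp <;> ring

variable {c : A}

theorem qComm_psiI_psiT2 (h : UqM2Relations s K Kinv E F)
    (hq : s ^ 2 - (s ^ 2)⁻¹ ≠ 0) (hcK : Commute K c) (hcKinv : Commute Kinv c) :
    qComm s (psiI s K Kinv) (psiT2 E F c) = psiT1 s K Kinv E F c := by
  rw [psiI, psiT2, psiT1, qComm_smul_left, qComm_mul_right_of_commute (hcK.sub_left hcKinv),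
    h.qComm_K_sub_Kinv_E_sub_F, smul_mul_assoc, smul_smul]
  generalize s ^ 2 - (s ^ 2)⁻¹ = d at hq
  congr 1
  field_simp

theorem qComm_psiT1_psiI (h : UqM2Relations s K Kinv E F)
    (hq : s ^ 2 - (s ^ 2)⁻¹ ≠ 0) (hcK : Commute K c) (hcKinv : Commute Kinv c) :
    qComm s (psiT1 s K Kinv E F c) (psiI s K Kinv) = psiT2 E F c := by
  have hs : s ≠ 0 := by rintro rfl; simp at hq
  rw [psiI, psiT2, psiT1, qComm_smul_left, qComm_smul_right,
    qComm_mul_left_of_commute (hcK.sub_left hcKinv), h.qComm_KE_add_KinvF_K_sub_Kinv,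
    smul_mul_assoc, smul_smul, smul_smul]
  generalize s ^ 2 - (s ^ 2)⁻¹ = d at hq
  have hcoeff : Complex.I * s⁻¹ * (Complex.I / d) * (-s * d) = 1 := by
    field_simp
    rw [Complex.I_sq]
    ring
  rw [hcoeff, one_smul]

theorem qComm_psiT2_psiT1 (h : UqM2Relations s K Kinv E F) {a b : A}
    (hcK : Commute K c) (hcKinv : Commute Kinv c) (hcE : c * E = E * a)
    (hcF : c * F = F * b) (ha : (s ^ 2 • K + (s ^ 2)⁻¹ • Kinv) * a = 1)
    (hb : ((s ^ 2)⁻¹ • K + s ^ 2 • Kinv) * b = 1) :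
    qComm s (psiT2 E F c) (psiT1 s K Kinv E F c) = 0 := by
  have key : qComm s ((E - F) * c) ((K * E + Kinv * F) * c)
      = s • (E * F * ((((s ^ 2)⁻¹ • K + s ^ 2 • Kinv) * b
          - (s ^ 2 • K + (s ^ 2)⁻¹ • Kinv) * a) * c)) := by
    simp only [qComm, mul_sub, sub_mul, mul_add, add_mul, smul_sub, smul_add, smul_mul_assoc,
      mul_smul_comm, smul_smul, mul_assoc, mul_mul_eq_mul_of_mul_eq h.E_mul_K,
      mul_mul_eq_mul_of_mul_eq h.E_mul_Kinv, mul_mul_eq_mul_of_mul_eq h.F_mul_K,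
      mul_mul_eq_mul_of_mul_eq h.F_mul_Kinv, mul_mul_eq_mul_of_mul_eq h.F_mul_E,
      mul_mul_eq_mul_of_mul_eq hcK.eq.symm, mul_mul_eq_mul_of_mul_eq hcKinv.eq.symm,
      mul_mul_eq_mul_of_mul_eq hcE, mul_mul_eq_mul_of_mul_eq hcF]
    match_scalars <;> field_simp <;> ring
  rw [psiT2, psiT1, qComm_smul_right, key, ha, hb, sub_self, zero_mul, mul_zero, smul_zero,
    smul_zero]

end UqM2Relations

end UqM2

theorem stmt14_general (q sq : ℂ) (hq : q ≠ 0) (hq2 : q ^ 2 ≠ 1) (hsq : sq ^ 2 = q)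
    (A : Type*) [Ring A] [Algebra ℂ A] (K Kinv E F : A) (Cinv : ℤ → A)
    (hKK : K * Kinv = 1) (hKK' : Kinv * K = 1)
    (hKE : K * E * Kinv = q • E) (hKF : K * F * Kinv = q⁻¹ • F)
    (hEF : E * F = F * E)
    (hCinv' : ∀ k : ℤ, (q ^ k • K + q ^ (-k) • Kinv) * Cinv k = 1)
    (hCK : ∀ k : ℤ, K * Cinv k = Cinv k * K)
    (hCKinv : ∀ k : ℤ, Kinv * Cinv k = Cinv k * Kinv)
    (hCE : ∀ k : ℤ, Cinv k * E = E * Cinv (k + 1))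
    (hCF : ∀ k : ℤ, Cinv k * F = F * Cinv (k - 1)) :
    let ψI := (Complex.I / (q - q⁻¹)) • (K - Kinv)
    let ψT2 := (E - F) * Cinv 0
    let ψT1 := (Complex.I * sq⁻¹) • ((K * E + Kinv * F) * Cinv 0)
    sq • (ψI * ψT2) - sq⁻¹ • (ψT2 * ψI) = ψT1 ∧
    sq • (ψT1 * ψI) - sq⁻¹ • (ψI * ψT1) = ψT2 ∧
    sq • (ψT2 * ψT1) - sq⁻¹ • (ψT1 * ψT2) = 0 := by
  subst hsq
  have hs : sq ≠ 0 := by rintro rfl; simp at hq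
  have hq' : sq ^ 2 - (sq ^ 2)⁻¹ ≠ 0 := by
    intro h
    apply hq2
    field_simp at h
    linear_combination h
  have h := UqM2Relations.of_conj hs hKK hKK' hKE hKF hEF
  have hC1 : (sq ^ 2 • K + (sq ^ 2)⁻¹ • Kinv) * Cinv 1 = 1 := by simpa using hCinv' 1
  have hCm1 : ((sq ^ 2)⁻¹ • K + sq ^ 2 • Kinv) * Cinv (-1) = 1 := by simpa using hCinv' (-1)
  exact ⟨h.qComm_psiI_psiT2 hq' (hCK 0) (hCKinv 0),
    h.qComm_psiT1_psiI hq' (hCK 0) (hCKinv 0),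
    h.qComm_psiT2_psiT1 (hCK 0) (hCKinv 0) (by simpa using hCE 0) (by simpa using hCF 0)
      hC1 hCm1⟩

/-- Let A be a unital associative ℂ-algebra containing elements
K = q^H, Kinv = q^{-H}, E, F and Cinv k = (q^k q^H + q^{-k} q^{-H})⁻¹ (k ∈ ℤ)
satisfying the defining relations of the extension Û_q(m₂). Then the elements
ψ(I) = (i/(q-q⁻¹))(K - Kinv), ψ(T2) = (E-F)(q^H+q^{-H})⁻¹,
ψ(T1) = (i q^{H-1/2}E + i q^{-H-1/2}F)(q^H+q^{-H})⁻¹ satisfy the three defining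
relations of U_q(iso₂); i.e. the assignment extends to an algebra homomorphism
ψ : U_q(iso₂) → Û_q(m₂). -/
theorem stmt14 (q sq : ℂ) (hq : q ≠ 0) (hq2 : q ^ 2 ≠ 1) (hsq : sq ^ 2 = q)
    (A : Type*) [Ring A] [Algebra ℂ A] (K Kinv E F : A) (Cinv : ℤ → A)
    (hKK : K * Kinv = 1) (hKK' : Kinv * K = 1)
    (hKE : K * E * Kinv = q • E) (hKF : K * F * Kinv = q⁻¹ • F)
    (hEF : E * F = F * E)
    (hCinv : ∀ k : ℤ, Cinv k * (q ^ k • K + q ^ (-k) • Kinv) = 1)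
    (hCinv' : ∀ k : ℤ, (q ^ k • K + q ^ (-k) • Kinv) * Cinv k = 1)
    (hCK : ∀ k : ℤ, K * Cinv k = Cinv k * K)
    (hCKinv : ∀ k : ℤ, Kinv * Cinv k = Cinv k * Kinv)
    (hCE : ∀ k : ℤ, Cinv k * E = E * Cinv (k + 1))
    (hCF : ∀ k : ℤ, Cinv k * F = F * Cinv (k - 1)) :
    let ψI := (Complex.I / (q - q⁻¹)) • (K - Kinv)
    let ψT2 := (E - F) * Cinv 0
    let ψT1 := (Complex.I * sq⁻¹) • ((K * E + Kinv * F) * Cinv 0)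
    sq • (ψI * ψT2) - sq⁻¹ • (ψT2 * ψI) = ψT1 ∧
    sq • (ψT1 * ψI) - sq⁻¹ • (ψI * ψT1) = ψT2 ∧
    sq • (ψT2 * ψT1) - sq⁻¹ • (ψT1 * ψT2) = 0 :=
  stmt14_general q sq hq hq2 hsq A K Kinv E F Cinv hKK hKK' hKE hKF hEF hCinv' hCK hCKinv hCE hCF
end

section
/- If q is not a root of unity, every irreducible representation of U_q(m_2) (in which π(q^H) is diagonalizable with discrete spectrum of finite multiplicity) is either one-dimensional with π(E) = π(F) = 0 and π(q^H) a nonzero scalar, or equivalent to π_{rs} for some nonzero r, s. -/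
/-!
Take an eigenvector `v` of `K = π(q^H)`, with eigenvalue `μ ≠ 0`. Since `E` and `F` `q`-commute
with `K`, they shift eigenvalues by `q` and `q⁻¹`, and their kernels are invariant, so each of
them is zero or injective. If `F = 0`, the sum of the eigenspaces of `qⁿμ`, `n ≥ 1`, is invariant
and misses `v` (as `q` is not a root of unity), so it is `0` and `E v = 0`, whence `E = 0`;
symmetrically `E = 0` forces `F = 0`. When `E = F = 0` the line through `v` is invariant. Otherwise
`EF` commutes with everything and has an eigenvalue on the finite-dimensional `μ`-eigenspace, so
by Schur's lemma `EF = r² ≠ 0`. Then `r⁻¹E` is invertible, and the vectors `(r⁻¹E)ᵐ v`, `m ∈ ℤ`,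
are eigenvectors of `K` for the distinct eigenvalues `μqᵐ` spanning an invariant subspace: they
form a basis in which `K, K⁻¹, E, F` act by the formulas of `π_{rμ}`.
-/

noncomputable section

/-- π(q^H)|m⟩ = sqᵐ|m⟩. -/
def piK (q s : ℂ) : (ℤ →₀ ℂ) →ₗ[ℂ] (ℤ →₀ ℂ) := op fun m => (s * q ^ m) • e m

/-- π(q^{-H})|m⟩ = s⁻¹q⁻ᵐ|m⟩. -/
def piKinv (q s : ℂ) : (ℤ →₀ ℂ) →ₗ[ℂ] (ℤ →₀ ℂ) := op fun m => (s⁻¹ * q ^ (-m)) • e m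

/-- π(E)|m⟩ = r|m+1⟩. -/
def piE (r : ℂ) : (ℤ →₀ ℂ) →ₗ[ℂ] (ℤ →₀ ℂ) := op fun m => r • e (m + 1)

/-- π(F)|m⟩ = r|m-1⟩. -/
def piF (r : ℂ) : (ℤ →₀ ℂ) →ₗ[ℂ] (ℤ →₀ ℂ) := op fun m => r • e (m - 1)

end

theorem Set.forall_mem_insert_four {α : Type*} {P : α → Prop} {a b c d : α} :
    (∀ x ∈ ({a, b, c, d} : Set α), P x) ↔ P a ∧ P b ∧ P c ∧ P d := by
  simp

theorem mul_eq_smul_mul_of_mul_mul_eq_smul {k A : Type*} [CommSemiring k] [Semiring A] [Algebra k A]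
    {a b x : A} {c : k} (hba : b * a = 1) (h : a * (x * b) = c • x) : a * x = c • (x * a) :=
  calc a * x = a * (x * b) * a := by rw [mul_assoc, mul_assoc, hba, mul_one]
    _ = c • (x * a) := by rw [h, smul_mul_assoc]

theorem Units.mul_inv_eq_smul_inv_mul {k A : Type*} [CommSemiring k] [Semiring A] [Algebra k A]
    {u : Aˣ} {a : A} {c : k} (h : ↑u * a = c • (a * ↑u)) : a * ↑u⁻¹ = c • (↑u⁻¹ * a) :=
  calc a * ↑u⁻¹ = ↑u⁻¹ * (↑u * a) * ↑u⁻¹ := by rw [← mul_assoc, Units.inv_mul, one_mul]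
    _ = c • (↑u⁻¹ * a) := by
      rw [h, mul_smul_comm, smul_mul_assoc, mul_assoc, mul_assoc, Units.mul_inv, mul_one]

theorem Units.mul_zpow_eq_smul_zpow_mul {k A : Type*} [Field k] [Semiring A] [Algebra k A]
    {u : Aˣ} {a : A} {c : k} (hc : c ≠ 0) (h : a * ↑u = c • (↑u * a)) (m : ℤ) :
    a * ↑(u ^ m) = c ^ m • (↑(u ^ m) * a) := by
  have h' : a * ↑u⁻¹ = c⁻¹ • (↑u⁻¹ * a) :=
    Units.mul_inv_eq_smul_inv_mul (by rw [h, smul_smul, inv_mul_cancel₀ hc, one_smul])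
  induction m using Int.induction_on with
  | zero => simp
  | succ n ih =>
    rw [zpow_add_one, Units.val_mul, ← mul_assoc, ih, smul_mul_assoc, mul_assoc, h,
      mul_smul_comm, smul_smul, ← mul_assoc, zpow_add_one₀ hc]
  | pred n ih =>
    rw [zpow_sub_one, Units.val_mul, ← mul_assoc, ih, smul_mul_assoc, mul_assoc, h',
      mul_smul_comm, smul_smul, ← mul_assoc, zpow_sub_one₀ hc]

section Field

variable {k V : Type*} [Field k] [AddCommGroup V] [Module k V]

namespace Module.End

theorem eigenspace_le_comap_of_mul_eq_smul_mul {K T : Module.End k V} {c : k}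
    (h : K * T = c • (T * K)) (μ : k) :
    K.eigenspace μ ≤ (K.eigenspace (c * μ)).comap T := by
  intro x hx
  rw [Submodule.mem_comap, mem_eigenspace_iff] at *
  rw [← mul_apply, h, LinearMap.smul_apply, mul_apply, hx, map_smul, smul_smul]

theorem apply_eq_inv_smul_of_mul_eq_one {f g : Module.End k V} (hgf : g * f = 1) {a : k} {x : V}
    (hx : f x = a • x) : g x = a⁻¹ • x := by
  have hx' : x = a • g x := by rw [← map_smul, ← hx, ← mul_apply, hgf, one_apply]
  rcases eq_or_ne a 0 with rfl | ha
  · obtain rfl : x = 0 := by simpa using hx'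
    simp
  · conv_rhs => rw [hx']
    rw [smul_smul, inv_mul_cancel₀ ha, one_smul]

theorem HasEigenvalue.ne_zero_of_mul_eq_one {f g : Module.End k V} (hgf : g * f = 1) {μ : k}
    (hμ : f.HasEigenvalue μ) : μ ≠ 0 := by
  rintro rfl
  exact hμ ((eigenspace_zero f).trans (LinearMap.ker_eq_bot_of_inverse hgf))

theorem exists_hasEigenvalue_of_iSup_eigenspace_eq_top [Nontrivial V] {f : Module.End k V}
    (h : ⨆ μ, f.eigenspace μ = ⊤) : ∃ μ, f.HasEigenvalue μ := by
  by_contra! hf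
  have : (⊤ : Submodule k V) = ⊥ := by rw [← h]; simpa [hasEigenvalue_iff] using hf
  exact bot_ne_top this.symm

theorem exists_hasEigenvalue_of_mem_invtSubmodule [IsAlgClosed k] {f : Module.End k V}
    {p : Submodule k V} [FiniteDimensional k p] (hp : p ≠ ⊥) (hf : p ∈ f.invtSubmodule) :
    ∃ μ, f.HasEigenvalue μ := by
  have := Submodule.nontrivial_iff_ne_bot.mpr hp
  obtain ⟨μ, hμ⟩ := exists_eigenvalue (f.restrict hf)
  obtain ⟨x, hx⟩ := hμ.exists_hasEigenvector
  refine ⟨μ, hasEigenvalue_of_hasEigenvector (x := (x : V)) ⟨?_, ?_⟩⟩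
  · exact mem_eigenspace_iff.mpr (congrArg Subtype.val hx.apply_eq_smul)
  · exact_mod_cast hx.2

end Module.End

def IsIrreducibleFamily (S : Set (Module.End k V)) : Prop :=
  ∀ W : Submodule k V, (∀ T ∈ S, W ∈ T.invtSubmodule) → W = ⊥ ∨ W = ⊤

namespace IsIrreducibleFamily

variable {S : Set (Module.End k V)}

theorem eq_zero_or_ker_eq_bot (hS : IsIrreducibleFamily S) {X : Module.End k V}
    (hX : ∀ T ∈ S, ∃ a : k, X * T = a • (T * X)) : X = 0 ∨ LinearMap.ker X = ⊥ := by
  refine (hS _ fun T hT x hx => ?_).symm.imp LinearMap.ker_eq_top.mp id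
  obtain ⟨a, ha⟩ := hX T hT
  change X (T x) = 0
  rw [← Module.End.mul_apply, ha, LinearMap.smul_apply, Module.End.mul_apply,
    LinearMap.mem_ker.mp hx, map_zero, smul_zero]

theorem eq_smul_one_of_commute (hS : IsIrreducibleFamily S) {X : Module.End k V}
    (hX : ∀ T ∈ S, Commute X T) {μ : k} (hμ : X.HasEigenvalue μ) : X = μ • 1 := by
  refine sub_eq_zero.mp ((hS.eq_zero_or_ker_eq_bot fun T hT => ⟨1, ?_⟩).resolve_right ?_)
  · rw [one_smul]
    exact ((hX T hT).sub_left ((Commute.one_left T).smul_left μ)).eq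
  · rwa [← Module.End.eigenspace_def]

theorem exists_eq_smul (hS : IsIrreducibleFamily S) {v : V} (hv : v ≠ 0)
    (hvS : ∀ T ∈ S, ∃ a : k, T v = a • v) (w : V) : ∃ c : k, w = c • v := by
  have hspan : Submodule.span k {v} = ⊤ := by
    refine (hS _ fun T hT => Submodule.span_le.mpr (Set.singleton_subset_iff.mpr ?_)).resolve_left
      ?_
    · obtain ⟨a, ha⟩ := hvS T hT
      rw [SetLike.mem_coe, Submodule.mem_comap, ha]
      exact Submodule.smul_mem _ a (Submodule.mem_span_singleton_self v)
    · exact Submodule.span_singleton_eq_bot.not.mpr hv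
  have hw : w ∈ Submodule.span k {v} := hspan ▸ Submodule.mem_top
  obtain ⟨c, hc⟩ := Submodule.mem_span_singleton.mp hw
  exact ⟨c, hc.symm⟩

theorem span_range_eq_top (hS : IsIrreducibleFamily S) {ι : Type*} {w : ι → V} {i : ι}
    (hi : w i ≠ 0) (hw : ∀ T ∈ S, ∀ j, T (w j) ∈ Submodule.span k (Set.range w)) :
    Submodule.span k (Set.range w) = ⊤ := by
  refine (hS _ fun T hT => Submodule.span_le.mpr ?_).resolve_left ?_
  · rintro _ ⟨j, rfl⟩
    exact hw T hT j
  · exact (Submodule.ne_bot_iff _).mpr ⟨w i, Submodule.subset_span ⟨i, rfl⟩, hi⟩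

theorem apply_eq_zero_of_mul_eq_smul_mul (hS : IsIrreducibleFamily S) {K X : Module.End k V}
    {c μ : k} (hc : ∀ n : ℕ, c ^ (n + 1) ≠ 1) (hμ : μ ≠ 0)
    (hSK : ∀ T ∈ S, ∃ n : ℕ, K * T = c ^ n • (T * K)) (hX : K * X = c • (X * K))
    {v : V} (hv : v ∈ K.eigenspace μ) : X v = 0 := by
  set W := ⨆ n : ℕ, K.eigenspace (c ^ (n + 1) * μ)
  have hW : ∀ T ∈ S, W ∈ T.invtSubmodule := fun T hT => by
    obtain ⟨m, hm⟩ := hSK T hT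
    refine iSup_le fun n => (K.eigenspace_le_comap_of_mul_eq_smul_mul hm _).trans
      (Submodule.comap_mono ?_)
    rw [← mul_assoc, ← pow_add, ← add_assoc]
    exact le_iSup (fun n => K.eigenspace (c ^ (n + 1) * μ)) (m + n)
  have hμW : Disjoint (K.eigenspace μ) W :=
    (K.eigenspaces_iSupIndep.disjoint_biSup (y := {ν | ν ≠ μ}) (by simp)).mono_right
      (iSup_le fun n => le_biSup K.eigenspace (show c ^ (n + 1) * μ ∈ {ν | ν ≠ μ} from
        fun h => hc n ((mul_eq_right₀ hμ).mp h)))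
  have hXv : X v ∈ W := Submodule.mem_iSup_of_mem 0 (by
    simpa using K.eigenspace_le_comap_of_mul_eq_smul_mul hX μ hv)
  rcases hS W hW with h | h
  · simpa [h] using hXv
  · obtain rfl : v = 0 := Submodule.disjoint_def.mp hμW v hv (h ▸ Submodule.mem_top)
    exact map_zero X

theorem eq_zero_of_mul_eq_smul_mul (hS : IsIrreducibleFamily S) {K X : Module.End k V} {c μ : k}
    (hc : ∀ n : ℕ, c ^ (n + 1) ≠ 1) (hSK : ∀ T ∈ S, ∃ n : ℕ, K * T = c ^ n • (T * K))
    (hX : K * X = c • (X * K)) (hXS : ∀ T ∈ S, ∃ a : k, X * T = a • (T * X)) {v : V}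
    (hv : K.HasEigenvector μ v) (hμ : μ ≠ 0) : X = 0 :=
  (hS.eq_zero_or_ker_eq_bot hXS).resolve_right fun hker => hv.2 <|
    LinearMap.ker_eq_bot'.mp hker v (hS.apply_eq_zero_of_mul_eq_smul_mul hc hμ hSK hX hv.1)

end IsIrreducibleFamily

end Field

theorem injective_zpow_of_pow_ne_one {G₀ : Type*} [GroupWithZero G₀] {q : G₀} (hq : q ≠ 0)
    (hroot : ∀ n : ℕ, n ≠ 0 → q ^ n ≠ 1) : Function.Injective fun m : ℤ => q ^ m := by
  intro a b hab
  by_contra hne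
  have hab' : q ^ (a - b) = 1 := by
    rw [zpow_sub₀ hq, div_eq_one_iff_eq (zpow_ne_zero b hq)]
    exact hab
  obtain ⟨n, hn, hqn⟩ := isOfFinOrder_iff_pow_eq_one.mp
    (isOfFinOrder_iff_zpow_eq_one.mpr ⟨a - b, sub_ne_zero.mpr hne, hab'⟩)
  exact hroot n hn.ne' hqn

section Intertwiners

variable {V : Type*} [AddCommGroup V] [Module ℂ V]

theorem apply_op_eq_of_apply_e (A : (ℤ →₀ ℂ) →ₗ[ℂ] V) (T : Module.End ℂ V) {f : ℤ → ℤ →₀ ℂ}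
    (h : ∀ m, A (f m) = T (A (e m))) (x : ℤ →₀ ℂ) : A (op f x) = T (A x) := by
  have : A ∘ₗ op f = T ∘ₗ A := Finsupp.lhom_ext' fun m => LinearMap.ext_ring <| by
    simpa [op, e] using h m
  exact LinearMap.congr_fun this x

theorem Module.Basis.repr_symm_intertwines_pi (B : Module.Basis ℤ ℂ V) {q r s : ℂ}
    {K Kinv E F : Module.End ℂ V} (hK : ∀ m, K (B m) = (s * q ^ m) • B m)
    (hKinv : ∀ m, Kinv (B m) = (s⁻¹ * q ^ (-m)) • B m) (hE : ∀ m, E (B m) = r • B (m + 1))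
    (hF : ∀ m, F (B m) = r • B (m - 1)) :
    (∀ x, B.repr.symm (piK q s x) = K (B.repr.symm x)) ∧
      (∀ x, B.repr.symm (piKinv q s x) = Kinv (B.repr.symm x)) ∧
      (∀ x, B.repr.symm (piE r x) = E (B.repr.symm x)) ∧
      (∀ x, B.repr.symm (piF r x) = F (B.repr.symm x)) := by
  have hB : ∀ m, B.repr.symm (e m) = B m := B.repr_symm_single_one
  refine ⟨apply_op_eq_of_apply_e B.repr.symm.toLinearMap K fun m => ?_,
    apply_op_eq_of_apply_e B.repr.symm.toLinearMap Kinv fun m => ?_,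
    apply_op_eq_of_apply_e B.repr.symm.toLinearMap E fun m => ?_,
    apply_op_eq_of_apply_e B.repr.symm.toLinearMap F fun m => ?_⟩ <;>
  simp only [LinearEquiv.coe_coe, map_smul, hB]
  exacts [(hK m).symm, (hKinv m).symm, (hE m).symm, (hF m).symm]

end Intertwiners

section Uqm2

variable {V : Type*} [AddCommGroup V] [Module ℂ V]

structure IsUqm2Rep (q : ℂ) (K Kinv E F : Module.End ℂ V) : Prop where
  K_mul_Kinv : K * Kinv = 1
  Kinv_mul_K : Kinv * K = 1
  K_mul_E : K * E = q • (E * K)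
  K_mul_F : K * F = q⁻¹ • (F * K)
  commute_E_F : Commute E F

namespace IsUqm2Rep

variable {q : ℂ} {K Kinv E F : Module.End ℂ V}

def unitK (h : IsUqm2Rep q K Kinv E F) : (Module.End ℂ V)ˣ :=
  ⟨K, Kinv, h.K_mul_Kinv, h.Kinv_mul_K⟩

theorem E_semicommute (h : IsUqm2Rep q K Kinv E F) (hq : q ≠ 0) :
    ∀ T ∈ ({K, Kinv, E, F} : Set (Module.End ℂ V)), ∃ a : ℂ, E * T = a • (T * E) := by
  refine Set.forall_mem_insert_four.mpr ⟨⟨q⁻¹, ?_⟩, ⟨q, ?_⟩, ⟨1, ?_⟩, ⟨1, ?_⟩⟩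
  · rw [h.K_mul_E, smul_smul, inv_mul_cancel₀ hq, one_smul]
  · exact Units.mul_inv_eq_smul_inv_mul (u := h.unitK) h.K_mul_E
  · rw [one_smul]
  · rw [one_smul, h.commute_E_F.eq]

theorem F_semicommute (h : IsUqm2Rep q K Kinv E F) (hq : q ≠ 0) :
    ∀ T ∈ ({K, Kinv, E, F} : Set (Module.End ℂ V)), ∃ a : ℂ, F * T = a • (T * F) := by
  refine Set.forall_mem_insert_four.mpr ⟨⟨q, ?_⟩, ⟨q⁻¹, ?_⟩, ⟨1, ?_⟩, ⟨1, ?_⟩⟩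
  · rw [h.K_mul_F, smul_smul, mul_inv_cancel₀ hq, one_smul]
  · exact Units.mul_inv_eq_smul_inv_mul (u := h.unitK) h.K_mul_F
  · rw [one_smul, h.commute_E_F.eq]
  · rw [one_smul]

theorem commute_K_E_mul_F (h : IsUqm2Rep q K Kinv E F) (hq : q ≠ 0) : Commute K (E * F) :=
  calc K * (E * F) = q • (E * (K * F)) := by rw [← mul_assoc, h.K_mul_E, smul_mul_assoc, mul_assoc]
    _ = E * F * K := by
      rw [h.K_mul_F, mul_smul_comm, smul_smul, mul_inv_cancel₀ hq, one_smul, mul_assoc]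

theorem E_mul_F_commute (h : IsUqm2Rep q K Kinv E F) (hq : q ≠ 0) :
    ∀ T ∈ ({K, Kinv, E, F} : Set (Module.End ℂ V)), Commute (E * F) T :=
  Set.forall_mem_insert_four.mpr ⟨(h.commute_K_E_mul_F hq).symm,
    (h.commute_K_E_mul_F hq).symm.units_inv_right (u := h.unitK),
    (Commute.refl E).mul_left h.commute_E_F.symm, h.commute_E_F.mul_left (Commute.refl F)⟩

theorem E_eq_zero_of_F_eq_zero (h : IsUqm2Rep q K Kinv E F) (hq : q ≠ 0)
    (hroot : ∀ n : ℕ, n ≠ 0 → q ^ n ≠ 1) (hS : IsIrreducibleFamily {K, Kinv, E, F})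
    {μ : ℂ} {v : V} (hv : K.HasEigenvector μ v) (hF : F = 0) : E = 0 := by
  refine hS.eq_zero_of_mul_eq_smul_mul (fun n => hroot _ n.succ_ne_zero)
    (Set.forall_mem_insert_four.mpr ⟨⟨0, ?_⟩, ⟨0, ?_⟩, ⟨1, ?_⟩, ⟨0, ?_⟩⟩) h.K_mul_E
    (h.E_semicommute hq) hv
    ((K.hasEigenvalue_of_hasEigenvector hv).ne_zero_of_mul_eq_one h.Kinv_mul_K)
  all_goals simp [h.K_mul_Kinv, h.Kinv_mul_K, h.K_mul_E, hF]

theorem F_eq_zero_of_E_eq_zero (h : IsUqm2Rep q K Kinv E F) (hq : q ≠ 0)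
    (hroot : ∀ n : ℕ, n ≠ 0 → q ^ n ≠ 1) (hS : IsIrreducibleFamily {K, Kinv, E, F})
    {μ : ℂ} {v : V} (hv : K.HasEigenvector μ v) (hE : E = 0) : F = 0 := by
  refine hS.eq_zero_of_mul_eq_smul_mul (c := q⁻¹)
    (fun n => by rw [inv_pow, inv_ne_one]; exact hroot _ n.succ_ne_zero)
    (Set.forall_mem_insert_four.mpr ⟨⟨0, ?_⟩, ⟨0, ?_⟩, ⟨0, ?_⟩, ⟨1, ?_⟩⟩) h.K_mul_F
    (h.F_semicommute hq) hv
    ((K.hasEigenvalue_of_hasEigenvector hv).ne_zero_of_mul_eq_one h.Kinv_mul_K)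
  all_goals simp [h.K_mul_Kinv, h.Kinv_mul_K, h.K_mul_F, hE]

theorem exists_E_mul_F_eq_sq (h : IsUqm2Rep q K Kinv E F) (hq : q ≠ 0)
    (hS : IsIrreducibleFamily {K, Kinv, E, F}) (hE : E ≠ 0) (hF : F ≠ 0) {μ : ℂ}
    (hμ : K.HasEigenvalue μ) [FiniteDimensional ℂ (K.eigenspace μ)] :
    ∃ r : ℂ, r ≠ 0 ∧ E * F = r ^ 2 • 1 := by
  obtain ⟨l, hl⟩ := Module.End.exists_hasEigenvalue_of_mem_invtSubmodule hμ
    (Module.End.mapsTo_genEigenspace_of_comm (h.commute_K_E_mul_F hq) μ 1)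
  have hEF := hS.eq_smul_one_of_commute (h.E_mul_F_commute hq) hl
  have hEinj := (hS.eq_zero_or_ker_eq_bot (h.E_semicommute hq)).resolve_left hE
  have hl0 : l ≠ 0 := by
    rintro rfl
    refine hF (LinearMap.ext fun x => LinearMap.ker_eq_bot'.mp hEinj _ ?_)
    simpa using LinearMap.congr_fun hEF x
  obtain ⟨r, rfl⟩ := IsAlgClosed.exists_pow_nat_eq l two_pos
  exact ⟨r, ne_zero_pow two_ne_zero hl0, hEF⟩

theorem exists_ladder (h : IsUqm2Rep q K Kinv E F) (hq : q ≠ 0) {r s : ℂ} (hr : r ≠ 0)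
    (hEF : E * F = r ^ 2 • 1) {v : V} (hv : K.HasEigenvector s v) :
    ∃ w : ℤ → V, (∀ m, K.HasEigenvector (s * q ^ m) (w m)) ∧
      (∀ m, E (w m) = r • w (m + 1)) ∧ (∀ m, F (w m) = r • w (m - 1)) := by
  have hu : ∀ {X Y : Module.End ℂ V}, X * Y = r ^ 2 • 1 → r⁻¹ • X * r⁻¹ • Y = 1 := fun hXY => by
    rw [smul_mul_smul_comm, hXY, smul_smul, show r⁻¹ * r⁻¹ * r ^ 2 = 1 by field_simp, one_smul]
  let u : (Module.End ℂ V)ˣ := ⟨r⁻¹ • E, r⁻¹ • F, hu hEF, hu (h.commute_E_F.eq ▸ hEF)⟩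
  have hKu : K * ↑u = q • (↑u * K) := by
    change K * (r⁻¹ • E) = q • (r⁻¹ • E * K)
    rw [mul_smul_comm, h.K_mul_E, smul_mul_assoc, smul_comm]
  refine ⟨fun m => (↑(u ^ m) : Module.End ℂ V) v, fun m => ⟨?_, ?_⟩, fun m => ?_, fun m => ?_⟩
  · dsimp only
    rw [Module.End.mem_eigenspace_iff, ← Module.End.mul_apply,
      Units.mul_zpow_eq_smul_zpow_mul hq hKu m, LinearMap.smul_apply, Module.End.mul_apply,
      hv.apply_eq_smul, map_smul, smul_smul, mul_comm]
  · exact (map_ne_zero_iff _ ((Module.End.isUnit_iff _).mp (u ^ m).isUnit).injective).mpr hv.2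
  · dsimp only
    rw [add_comm, zpow_one_add, Units.val_mul, Module.End.mul_apply]
    change _ = r • (r⁻¹ • E) _
    rw [LinearMap.smul_apply, smul_smul, mul_inv_cancel₀ hr, one_smul]
  · dsimp only
    rw [sub_eq_neg_add, zpow_add, zpow_neg_one, Units.val_mul, Module.End.mul_apply]
    change _ = r • (r⁻¹ • F) _
    rw [LinearMap.smul_apply, smul_smul, mul_inv_cancel₀ hr, one_smul]

theorem exists_basis_pi (h : IsUqm2Rep q K Kinv E F) (hq : q ≠ 0)
    (hinj : Function.Injective fun m : ℤ => q ^ m) (hS : IsIrreducibleFamily {K, Kinv, E, F})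
    {r s : ℂ} (hr : r ≠ 0) (hEF : E * F = r ^ 2 • 1) {v : V} (hv : K.HasEigenvector s v) :
    ∃ B : Module.Basis ℤ ℂ V, (∀ m, K (B m) = (s * q ^ m) • B m) ∧
      (∀ m, Kinv (B m) = (s⁻¹ * q ^ (-m)) • B m) ∧ (∀ m, E (B m) = r • B (m + 1)) ∧
      (∀ m, F (B m) = r • B (m - 1)) := by
  obtain ⟨w, hw, hEw, hFw⟩ := h.exists_ladder hq hr hEF hv
  have hs : s ≠ 0 := (K.hasEigenvalue_of_hasEigenvector hv).ne_zero_of_mul_eq_one h.Kinv_mul_K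
  have hKw : ∀ m, K (w m) = (s * q ^ m) • w m := fun m => (hw m).apply_eq_smul
  have hKinvw : ∀ m, Kinv (w m) = (s⁻¹ * q ^ (-m)) • w m := fun m => by
    rw [Module.End.apply_eq_inv_smul_of_mul_eq_one h.Kinv_mul_K (hKw m), mul_inv, zpow_neg]
  have hli : LinearIndependent ℂ w := Module.End.eigenvectors_linearIndependent' K
    (fun m => s * q ^ m) ((mul_right_injective₀ hs).comp hinj) w hw
  have hspan : Submodule.span ℂ (Set.range w) = ⊤ :=
    hS.span_range_eq_top (hw 0).2 <| Set.forall_mem_insert_four.mpr <| by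
      refine ⟨fun j => ?_, fun j => ?_, fun j => ?_, fun j => ?_⟩ <;>
        simp only [hKw, hKinvw, hEw, hFw] <;>
        exact Submodule.smul_mem _ _ (Submodule.subset_span (Set.mem_range_self _))
  refine ⟨Module.Basis.mk hli hspan.ge, ?_⟩
  simpa only [Module.Basis.mk_apply] using ⟨hKw, hKinvw, hEw, hFw⟩

end IsUqm2Rep

end Uqm2

/-- For q not a root of unity, every irreducible representation of
U_q(m₂) in which π(q^H) is diagonalizable (its eigenvectors span the space) with
finite-dimensional eigenspaces is either one-dimensional with π(E) = π(F) = 0 and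
π(q^H) a nonzero scalar, or equivalent to π_{rs} for some nonzero r, s. -/
theorem stmt17 (q : ℂ) (hq : q ≠ 0) (hroot : ∀ n : ℕ, n ≠ 0 → q ^ n ≠ 1)
    (V : Type*) [AddCommGroup V] [Module ℂ V] [Nontrivial V]
    (K Kinv E F : V →ₗ[ℂ] V)
    (hKK : K ∘ₗ Kinv = LinearMap.id) (hKK' : Kinv ∘ₗ K = LinearMap.id)
    (hKE : K ∘ₗ E ∘ₗ Kinv = q • E) (hKF : K ∘ₗ F ∘ₗ Kinv = q⁻¹ • F)
    (hEF : E ∘ₗ F = F ∘ₗ E)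
    (hdiag : (⨆ μ : ℂ, Module.End.eigenspace K μ) = ⊤)
    (hfin : ∀ μ : ℂ, FiniteDimensional ℂ (Module.End.eigenspace K μ))
    (hirr : ∀ W : Submodule ℂ V,
      (∀ x ∈ W, K x ∈ W ∧ Kinv x ∈ W ∧ E x ∈ W ∧ F x ∈ W) → W = ⊥ ∨ W = ⊤) :
    (∃ σ : ℂ, σ ≠ 0 ∧ (∃ v : V, v ≠ 0 ∧ ∀ w : V, ∃ c : ℂ, w = c • v) ∧
      E = 0 ∧ F = 0 ∧ K = σ • LinearMap.id) ∨
    (∃ r s : ℂ, r ≠ 0 ∧ s ≠ 0 ∧ ∃ A : (ℤ →₀ ℂ) ≃ₗ[ℂ] V,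
      (∀ x, A (piK q s x) = K (A x)) ∧
      (∀ x, A (piKinv q s x) = Kinv (A x)) ∧
      (∀ x, A (piE r x) = E (A x)) ∧
      (∀ x, A (piF r x) = F (A x))) := by
  have h : IsUqm2Rep q K Kinv E F := ⟨hKK, hKK', mul_eq_smul_mul_of_mul_mul_eq_smul hKK' hKE,
    mul_eq_smul_mul_of_mul_mul_eq_smul hKK' hKF, hEF⟩
  have hS : IsIrreducibleFamily {K, Kinv, E, F} := fun W hW => by
    obtain ⟨hK, hKinv, hE, hF⟩ := Set.forall_mem_insert_four.mp hW
    exact hirr W fun x hx => ⟨hK hx, hKinv hx, hE hx, hF hx⟩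
  obtain ⟨μ, hμ⟩ := Module.End.exists_hasEigenvalue_of_iSup_eigenspace_eq_top hdiag
  obtain ⟨v, hv⟩ := hμ.exists_hasEigenvector
  have hμ0 : μ ≠ 0 := hμ.ne_zero_of_mul_eq_one hKK'
  by_cases hE : E = 0
  · have hF := h.F_eq_zero_of_E_eq_zero hq hroot hS hv hE
    have hv_spans := hS.exists_eq_smul hv.2 <| Set.forall_mem_insert_four.mpr
      ⟨⟨μ, hv.apply_eq_smul⟩,
        ⟨μ⁻¹, Module.End.apply_eq_inv_smul_of_mul_eq_one hKK' hv.apply_eq_smul⟩,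
        ⟨0, by simp [hE]⟩, ⟨0, by simp [hF]⟩⟩
    refine Or.inl ⟨μ, hμ0, ⟨v, hv.2, hv_spans⟩, hE, hF, LinearMap.ext fun w => ?_⟩
    obtain ⟨c, rfl⟩ := hv_spans w
    rw [LinearMap.smul_apply, LinearMap.id_apply, map_smul, hv.apply_eq_smul, smul_comm]
  · have hF : F ≠ 0 := fun hF => hE (h.E_eq_zero_of_F_eq_zero hq hroot hS hv hF)
    have := hfin μ
    obtain ⟨r, hr, hEF'⟩ := h.exists_E_mul_F_eq_sq hq hS hE hF hμ
    obtain ⟨B, hBK, hBKinv, hBE, hBF⟩ :=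
      h.exists_basis_pi hq (injective_zpow_of_pow_ne_one hq hroot) hS hr hEF' hv
    exact Or.inr ⟨r, μ, hr, hμ0, B.repr.symm, B.repr_symm_intertwines_pi hBK hBKinv hBE hBF⟩
end
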